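/- arXiv:0802.1293 — 4 statements merged into one kernel-verified Lean document; each statement's English description precedes it below -/
import Mathlib

section
/- Let A_1, A_2, … be a quasifibonacci sequence of level N and let n be a positive integer with S_n nonempty. Then the relation ≥ on S_n (reflexive-transitive closure of the edge relation) is a partial order, any two elements of S_n have a least upper bound and a greatest lower bound with respect to it, and the resulting lattice is modular (for all x, y, z with x ≤ z, one has x ∨ (y ∧ z) = (x ∨ y) ∧ z). -/
/-!
Encode an element `a` of `S_n` by the multiset `c(a)` of expansions
`A_{k+N} ↦ A_k + ⋯ + A_{k+N-1}` performed along a path from the top element. It does not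
depend on the path: in `ℤ[X]` an expansion at `k` changes `∑_{i ∈ a} X^i` by
`X^k (1 + X + ⋯ + X^{N-1} - X^N)`. Simultaneously enabled expansions occupy disjoint windows,
so they commute, and so do the inverse moves (collapses). This diamond property makes `a ≥ b`
equivalent to `c(a) ≤ c(b)`, and shows that the meet and the join of `a` and `b` exist, with
multisets `c(a) ∪ c(b)` and `c(a) ∩ c(b)`. The top element exists because collapsing terminates
in a representation without `N` consecutive indices, which is unique by a Zeckendorf-type
argument. Hence `S_n` embeds, reversing the order, as a sublattice of the distributive lattice
of multisets, and is in particular modular.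
-/

/-- `A` (with meaningful values at indices `≥ 1`) is a quasifibonacci sequence of level `N`:
the terms are positive, `A (k+N) = A (k+N-1) + ⋯ + A k` for all `k ≥ 1`, and
`A k > A (k-1) + ⋯ + A 1` for all `1 ≤ k ≤ N`. -/
def QuasiFib (N : ℕ) (A : ℕ → ℕ) : Prop :=
  (∀ i, 1 ≤ i → 0 < A i) ∧
  (∀ k, 1 ≤ k → A (k + N) = ∑ i ∈ Finset.Icc k (k + N - 1), A i) ∧
  (∀ k, 1 ≤ k → k ≤ N → (∑ i ∈ Finset.Icc 1 (k - 1), A i) < A k)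

/-- `SRep A n` is the set of partitions of `n` into distinct terms of `A`, encoded as the
finite sets `F` of positive indices with `∑_{i ∈ F} A i = n` (i.e. the 0-1 indicator
sequences of the paper). -/
def SRep (A : ℕ → ℕ) (n : ℕ) : Set (Finset ℕ) :=
  {F | (∀ i ∈ F, 1 ≤ i) ∧ (∑ i ∈ F, A i) = n}

/-- the length `l(a)`: the largest index `i` with `a_i = 1` (and `0` for the empty set). -/
def len (F : Finset ℕ) : ℕ := F.sup id

/-- The directed edge relation of the digraph `G_n`: `(a,b)` is an edge iff there is a `k ≥ 1`
with `a_{k+N} = 1`, `a_k = ⋯ = a_{k+N-1} = 0`, `b_{k+N} = 0`, `b_k = ⋯ = b_{k+N-1} = 1`, and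
`a_t = b_t` for all `t ∉ {k, …, k+N}`. -/
def Edge (N : ℕ) (F G : Finset ℕ) : Prop :=
  ∃ k, 1 ≤ k ∧ (k + N) ∈ F ∧ (∀ i ∈ Finset.Ico k (k + N), i ∉ F) ∧
    (k + N) ∉ G ∧ (∀ i ∈ Finset.Ico k (k + N), i ∈ G) ∧
    (∀ t, t ∉ Finset.Icc k (k + N) → (t ∈ F ↔ t ∈ G))

/-- The partial order of the poset `P_n`: `a ≥ b` iff `b` is reachable from `a` by a
(possibly empty) directed path of edges. -/
def pge (N : ℕ) : Finset ℕ → Finset ℕ → Prop := Relation.ReflTransGen (Edge N)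

/-- `A_{k,0} = A_k + Σ_{1 ≤ i < k-N-1, N∤i} A_{k-N-1-i}`. -/
def Ak0 (N : ℕ) (A : ℕ → ℕ) (k : ℕ) : ℕ :=
  A k + ∑ i ∈ (Finset.Ico 1 (k - N - 1)).filter (fun i => ¬ N ∣ i), A (k - N - 1 - i)

/-- `A_{k,1} = A_k + Σ_{1 ≤ i < k-N, N∤i} A_{k-N-i}`. -/
def Ak1 (N : ℕ) (A : ℕ → ℕ) (k : ℕ) : ℕ :=
  A k + ∑ i ∈ (Finset.Ico 1 (k - N)).filter (fun i => ¬ N ∣ i), A (k - N - i)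

/-- `A_{k,2} = A_k + Σ_{1 ≤ i < k-N+1, N∤i} A_{k-N+1-i}`. -/
def Ak2 (N : ℕ) (A : ℕ → ℕ) (k : ℕ) : ℕ :=
  A k + ∑ i ∈ (Finset.Ico 1 (k - N + 1)).filter (fun i => ¬ N ∣ i), A (k - N + 1 - i)

/-- `s` is a least upper bound of `a` and `b` inside `S` (w.r.t. `pge N`, where
`pge N x y` means `x ≥ y`). -/
def IsLUBin (N : ℕ) (S : Set (Finset ℕ)) (a b s : Finset ℕ) : Prop :=
  s ∈ S ∧ pge N s a ∧ pge N s b ∧ ∀ c ∈ S, pge N c a → pge N c b → pge N c s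

/-- `s` is a greatest lower bound of `a` and `b` inside `S`. -/
def IsGLBin (N : ℕ) (S : Set (Finset ℕ)) (a b s : Finset ℕ) : Prop :=
  s ∈ S ∧ pge N a s ∧ pge N b s ∧ ∀ c ∈ S, pge N a c → pge N b c → pge N s c

open Finset

section Abstract

variable {α ι : Type*} {en : α → ι → Prop} {f : α → ι → α}

inductive Fires (en : α → ι → Prop) (f : α → ι → α) : α → List ι → α → Prop
  | nil (x : α) : Fires en f x [] x
  | cons {x : α} {k : ι} {l : List ι} {y : α} : en x k → Fires en f (f x k) l y →
      Fires en f x (k :: l) y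

def MovesCommute (en : α → ι → Prop) (f : α → ι → α) : Prop :=
  ∀ ⦃x k k'⦄, en x k → en x k' → k ≠ k' → en (f x k) k' ∧ f (f x k) k' = f (f x k') k

namespace Fires

variable {x y z : α} {k : ι} {l : List ι}

lemma append {l' : List ι} (h : Fires en f x l y) (h' : Fires en f y l' z) :
    Fires en f x (l ++ l') z := by
  induction h with
  | nil => exact h'
  | cons hk _ ih => exact cons hk (ih h')

lemma preserves {P : α → Prop} (hP : ∀ x k, en x k → P x → P (f x k))
    (h : Fires en f x l y) (hx : P x) : P y := by
  induction h with
  | nil => exact hx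
  | cons hk _ ih => exact ih (hP _ _ hk hx)

lemma reverse {en' : α → ι → Prop} {f' : α → ι → α}
    (hinv : ∀ x k, en x k → en' (f x k) k ∧ f' (f x k) k = x)
    (h : Fires en f x l y) : Fires en' f' y l.reverse x := by
  induction h with
  | nil => exact nil _
  | cons hk _ ih =>
    obtain ⟨hen, hf⟩ := hinv _ _ hk
    rw [List.reverse_cons]
    exact ih.append (cons hen (by rw [hf]; exact nil _))

variable (hc : MovesCommute en f)
include hc

lemma persist (h : Fires en f x l y) (hk : en x k) (hkl : k ∉ l) : en y k := by
  induction h with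
  | nil => exact hk
  | cons ha _ ih =>
    simp only [List.mem_cons, not_or] at hkl
    exact ih (hc ha hk (Ne.symm hkl.1)).1 hkl.2

lemma lift (h : Fires en f x l y) (hk : en x k) (hkl : k ∉ l) :
    Fires en f (f x k) l (f y k) := by
  induction h with
  | nil => exact nil _
  | cons ha _ ih =>
    simp only [List.mem_cons, not_or] at hkl
    obtain ⟨hka, hcomm⟩ := hc ha hk (Ne.symm hkl.1)
    refine cons (hc hk ha hkl.1).1 ?_
    rw [← hcomm]
    exact ih hka hkl.2

variable [DecidableEq ι]

lemma behead (h : Fires en f x l y) (hk : en x k) (hkl : k ∈ l) :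
    Fires en f (f x k) (l.erase k) y := by
  induction h with
  | nil => simp at hkl
  | @cons x a t y ha hrest ih =>
    by_cases hak : a = k
    · subst hak
      simpa using hrest
    · have hkt : k ∈ t := by simpa [Ne.symm hak] using hkl
      obtain ⟨hka, hcomm⟩ := hc ha hk hak
      rw [List.erase_cons_tail (by simpa using hak)]
      refine cons (hc hk ha (Ne.symm hak)).1 ?_
      rw [← hcomm]
      exact ih hka hkt

lemma diamond {α₁ β₁ : List ι} (hα : Fires en f x α₁ y) (hβ : Fires en f x β₁ z) :
    ∃ w γ δ, Fires en f y γ w ∧ Fires en f z δ w ∧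
      (γ : Multiset ι) = β₁ - α₁ ∧ (δ : Multiset ι) = α₁ - β₁ := by
  induction hβ generalizing α₁ y with
  | nil => exact ⟨y, [], α₁, nil _, hα, by simp, by simp⟩
  | @cons x k β' z hk _ ih =>
    by_cases hkα : k ∈ α₁
    · obtain ⟨w, γ, δ, hγ, hδ, hγc, hδc⟩ := ih (hα.behead hc hk hkα)
      have hk₀ : 0 < Multiset.count k (α₁ : Multiset ι) := Multiset.count_pos.2 hkα
      refine ⟨w, γ, δ, hγ, hδ, ?_, ?_⟩ <;>
      · ext j
        rcases eq_or_ne j k with rfl | hjk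
        · simp only [hγc, hδc, Multiset.count_sub, ← Multiset.coe_erase, ← Multiset.cons_coe,
            Multiset.count_erase_self, Multiset.count_cons_self]
          omega
        · simp only [hγc, hδc, Multiset.count_sub, ← Multiset.coe_erase, ← Multiset.cons_coe,
            Multiset.count_erase_of_ne hjk, Multiset.count_cons_of_ne hjk]
    · obtain ⟨w, γ, δ, hγ, hδ, hγc, hδc⟩ := ih (hα.lift hc hk hkα)
      have hk₀ : Multiset.count k (α₁ : Multiset ι) = 0 := Multiset.count_eq_zero.2 hkα
      refine ⟨w, k :: γ, δ, cons (hα.persist hc hk hkα) hγ, hδ, ?_, ?_⟩ <;>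
      · ext j
        rcases eq_or_ne j k with rfl | hjk
        · simp only [hγc, hδc, Multiset.count_sub, ← Multiset.cons_coe, Multiset.count_cons_self]
          omega
        · simp only [hγc, hδc, Multiset.count_sub, ← Multiset.cons_coe,
            Multiset.count_cons_of_ne hjk]

end Fires

def Reach (en : α → ι → Prop) (f : α → ι → α) (x : α) (c : Multiset ι) (y : α) : Prop :=
  ∃ l : List ι, Fires en f x l y ∧ (l : Multiset ι) = c

namespace Reach

variable {x y z : α} {c d : Multiset ι}

lemma zero_iff : Reach en f x 0 y ↔ x = y := by
  constructor
  · rintro ⟨l, hl, hl0⟩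
    rw [Multiset.coe_eq_zero] at hl0
    subst hl0
    cases hl
    rfl
  · rintro rfl
    exact ⟨[], .nil _, rfl⟩

lemma single {k : ι} (hk : en x k) : Reach en f x {k} (f x k) :=
  ⟨[k], .cons hk (.nil _), rfl⟩

lemma trans (h : Reach en f x c y) (h' : Reach en f y d z) : Reach en f x (c + d) z := by
  obtain ⟨l, hl, rfl⟩ := h
  obtain ⟨l', hl', rfl⟩ := h'
  exact ⟨l ++ l', hl.append hl', rfl⟩

lemma preserves {P : α → Prop} (hP : ∀ x k, en x k → P x → P (f x k))
    (h : Reach en f x c y) (hx : P x) : P y := by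
  obtain ⟨l, hl, -⟩ := h
  exact hl.preserves hP hx

lemma reverse {en' : α → ι → Prop} {f' : α → ι → α}
    (hinv : ∀ x k, en x k → en' (f x k) k ∧ f' (f x k) k = x)
    (h : Reach en f x c y) : Reach en' f' y c x := by
  obtain ⟨l, hl, rfl⟩ := h
  exact ⟨l.reverse, hl.reverse hinv, Multiset.coe_reverse l⟩

variable [DecidableEq ι] (hc : MovesCommute en f)
include hc

lemma diamond (h : Reach en f x c y) (h' : Reach en f x d z) :
    ∃ w, Reach en f y (d - c) w ∧ Reach en f z (c - d) w := by
  obtain ⟨l, hl, rfl⟩ := h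
  obtain ⟨l', hl', rfl⟩ := h'
  obtain ⟨w, γ, δ, hγ, hδ, hγc, hδc⟩ := hl.diamond hc hl'
  exact ⟨w, ⟨γ, hγ, hγc⟩, ⟨δ, hδ, hδc⟩⟩

lemma right_unique (h : Reach en f x c y) (h' : Reach en f x c z) : y = z := by
  obtain ⟨w, hyw, hzw⟩ := h.diamond hc h'
  rw [tsub_self, zero_iff] at hyw hzw
  rw [hyw, hzw]

end Reach

end Abstract

namespace QuasiFib

variable {N : ℕ} {A : ℕ → ℕ} {n k k' p : ℕ} {a b g x y z T : Finset ℕ} {c d : Multiset ℕ}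

lemma pos (hA : QuasiFib N A) {i : ℕ} (hi : 1 ≤ i) : 0 < A i := hA.1 i hi

lemma sum_Ico_eq (hA : QuasiFib N A) (hN : 1 ≤ N) {k : ℕ} (hk : 1 ≤ k) :
    ∑ i ∈ Ico k (k + N), A i = A (k + N) := by
  rw [hA.2.1 k hk]
  congr 1
  ext i
  simp only [mem_Ico, mem_Icc]
  omega

lemma apply_lt_apply_add_one (hN : 2 ≤ N) (hA : QuasiFib N A) {i : ℕ} (hi : 1 ≤ i) :
    A i < A (i + 1) := by
  rcases le_or_gt (i + 1) N with h | h
  · calc A i ≤ ∑ j ∈ Icc 1 i, A j := single_le_sum (fun _ _ => Nat.zero_le _) (by simp [hi])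
      _ < A (i + 1) := hA.2.2 (i + 1) (by omega) h
  · have hrec := hA.sum_Ico_eq (by omega) (show 1 ≤ i + 1 - N by omega)
    rw [show i + 1 - N + N = i + 1 by omega, sum_Ico_succ_top (by omega)] at hrec
    have : A (i + 1 - N) ≤ ∑ j ∈ Ico (i + 1 - N) i, A j :=
      single_le_sum (fun _ _ => Nat.zero_le _) (by simp; omega)
    have := hA.pos (show 1 ≤ i + 1 - N by omega)
    omega

lemma strictMonoOn (hN : 2 ≤ N) (hA : QuasiFib N A) : StrictMonoOn A (Set.Ici 1) :=
  strictMonoOn_of_lt_add_one Set.ordConnected_Ici fun _ _ hi _ => hA.apply_lt_apply_add_one hN hi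

def CanExpand (N : ℕ) (x : Finset ℕ) (k : ℕ) : Prop :=
  1 ≤ k ∧ k + N ∈ x ∧ ∀ i ∈ Ico k (k + N), i ∉ x

def expand (N : ℕ) (x : Finset ℕ) (k : ℕ) : Finset ℕ :=
  x.erase (k + N) ∪ Ico k (k + N)

def CanCollapse (N : ℕ) (x : Finset ℕ) (k : ℕ) : Prop :=
  1 ≤ k ∧ k + N ∉ x ∧ ∀ i ∈ Ico k (k + N), i ∈ x

def collapse (N : ℕ) (x : Finset ℕ) (k : ℕ) : Finset ℕ :=
  insert (k + N) (x \ Ico k (k + N))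

@[simp]
lemma mem_expand : p ∈ expand N x k ↔ p ∈ x ∧ p ≠ k + N ∨ k ≤ p ∧ p < k + N := by
  simp [expand, and_comm]

@[simp]
lemma mem_collapse : p ∈ collapse N x k ↔ p = k + N ∨ p ∈ x ∧ ¬(k ≤ p ∧ p < k + N) := by
  simp [collapse]

lemma edge_iff : Edge N x y ↔ ∃ k, CanExpand N x k ∧ y = expand N x k := by
  constructor
  · rintro ⟨k, hk, hx, hwin, hy, hywin, hagree⟩
    refine ⟨k, ⟨hk, hx, hwin⟩, ?_⟩
    ext p
    have := hagree p
    have := hwin p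
    have := hywin p
    simp only [mem_expand, mem_Icc, mem_Ico] at *
    grind
  · rintro ⟨k, ⟨hk, hx, hwin⟩, rfl⟩
    refine ⟨k, hk, hx, hwin, ?_, ?_, fun t ht => ?_⟩
    · simp
    · intro i hi
      simp_all
    · simp only [mem_Icc] at ht
      simp only [mem_expand]
      grind

lemma canExpand_far (hk : CanExpand N x k) (hk' : CanExpand N x k') :
    k = k' ∨ k + N < k' ∨ k' + N < k := by
  by_contra! h
  rcases lt_or_gt_of_ne h.1 with hlt | hlt
  · exact hk'.2.2 (k + N) (mem_Ico.2 ⟨by omega, by omega⟩) hk.2.1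
  · exact hk.2.2 (k' + N) (mem_Ico.2 ⟨by omega, by omega⟩) hk'.2.1

lemma canCollapse_far (hk : CanCollapse N x k) (hk' : CanCollapse N x k') :
    k = k' ∨ k + N < k' ∨ k' + N < k := by
  by_contra! h
  rcases lt_or_gt_of_ne h.1 with hlt | hlt
  · exact hk.2.1 (hk'.2.2 (k + N) (mem_Ico.2 ⟨by omega, by omega⟩))
  · exact hk'.2.1 (hk.2.2 (k' + N) (mem_Ico.2 ⟨by omega, by omega⟩))

lemma movesCommute_expand : MovesCommute (CanExpand N) (expand N) := by
  intro x k k' hk hk' hne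
  have hfar := (canExpand_far hk hk').resolve_left hne
  refine ⟨?_, Finset.ext fun p => ?_⟩ <;>
  · simp only [CanExpand, mem_Ico, mem_expand] at hk hk' ⊢
    grind

lemma movesCommute_collapse : MovesCommute (CanCollapse N) (collapse N) := by
  intro x k k' hk hk' hne
  have hfar := (canCollapse_far hk hk').resolve_left hne
  refine ⟨?_, Finset.ext fun p => ?_⟩ <;>
  · simp only [CanCollapse, mem_Ico, mem_collapse] at hk hk' ⊢
    grind

lemma collapse_expand (hk : CanExpand N x k) :
    CanCollapse N (expand N x k) k ∧ collapse N (expand N x k) k = x := by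
  refine ⟨?_, Finset.ext fun p => ?_⟩ <;>
  · simp only [CanExpand, CanCollapse, mem_Ico, mem_expand, mem_collapse] at hk ⊢
    grind

lemma expand_collapse (hk : CanCollapse N x k) :
    CanExpand N (collapse N x k) k ∧ expand N (collapse N x k) k = x := by
  refine ⟨?_, Finset.ext fun p => ?_⟩ <;>
  · simp only [CanExpand, CanCollapse, mem_Ico, mem_expand, mem_collapse] at hk ⊢
    grind

abbrev Descends (N : ℕ) : Finset ℕ → Multiset ℕ → Finset ℕ → Prop :=
  Reach (CanExpand N) (expand N)

abbrev Ascends (N : ℕ) : Finset ℕ → Multiset ℕ → Finset ℕ → Prop :=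
  Reach (CanCollapse N) (collapse N)

lemma pge_iff : pge N x y ↔ ∃ c, Descends N x c y := by
  constructor
  · intro h
    induction h using Relation.ReflTransGen.head_induction_on with
    | refl => exact ⟨0, Reach.zero_iff.2 rfl⟩
    | head hxy _ ih =>
      obtain ⟨k, hk, rfl⟩ := edge_iff.1 hxy
      obtain ⟨c, hc⟩ := ih
      exact ⟨_, (Reach.single hk).trans hc⟩
  · rintro ⟨c, l, hl, -⟩
    induction hl with
    | nil => exact .refl
    | cons hk _ ih => exact .head (edge_iff.2 ⟨_, hk, rfl⟩) ih

lemma Descends.ascends (h : Descends N x c y) : Ascends N y c x :=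
  h.reverse fun _ _ hk => collapse_expand hk

lemma Ascends.descends (h : Ascends N x c y) : Descends N y c x :=
  h.reverse fun _ _ hk => expand_collapse hk

lemma sum_expand_add {M : Type*} [AddCommMonoid M] (hk : CanExpand N x k) (g : ℕ → M) :
    ∑ i ∈ expand N x k, g i + g (k + N) = ∑ i ∈ x, g i + ∑ i ∈ Ico k (k + N), g i := by
  have hdisj : Disjoint (x.erase (k + N)) (Ico k (k + N)) :=
    disjoint_right.2 fun i hi hix => hk.2.2 i hi (mem_of_mem_erase hix)
  rw [expand, sum_union hdisj, add_right_comm, sum_erase_add _ _ hk.2.1]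

lemma expand_mem_SRep (hN : 1 ≤ N) (hA : QuasiFib N A) (hx : x ∈ SRep A n)
    (hk : CanExpand N x k) : expand N x k ∈ SRep A n := by
  refine ⟨fun i hi => ?_, ?_⟩
  · rcases mem_expand.1 hi with ⟨hi, -⟩ | ⟨hki, -⟩
    · exact hx.1 i hi
    · exact hk.1.trans hki
  · have := sum_expand_add hk A
    rw [hA.sum_Ico_eq hN hk.1] at this
    rw [← hx.2]
    omega

lemma collapse_mem_SRep (hN : 1 ≤ N) (hA : QuasiFib N A) (hx : x ∈ SRep A n)
    (hk : CanCollapse N x k) : collapse N x k ∈ SRep A n := by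
  refine ⟨fun i hi => ?_, ?_⟩
  · rcases mem_collapse.1 hi with rfl | ⟨hi, -⟩
    · exact hk.1.trans (Nat.le_add_right k N)
    · exact hx.1 i hi
  · obtain ⟨hk', hx'⟩ := expand_collapse hk
    have := sum_expand_add hk' A
    rw [hx', hA.sum_Ico_eq hN hk.1] at this
    rw [← hx.2]
    omega

lemma Descends.mem_SRep (hN : 1 ≤ N) (hA : QuasiFib N A) (h : Descends N x c y)
    (hx : x ∈ SRep A n) : y ∈ SRep A n :=
  h.preserves (fun _ _ hk hx => expand_mem_SRep hN hA hx hk) hx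

lemma Ascends.mem_SRep (hN : 1 ≤ N) (hA : QuasiFib N A) (h : Ascends N x c y)
    (hx : x ∈ SRep A n) : y ∈ SRep A n :=
  h.preserves (fun _ _ hk hx => collapse_mem_SRep hN hA hx hk) hx

open Polynomial

noncomputable def indicatorPoly (x : Finset ℕ) : ℤ[X] := ∑ i ∈ x, X ^ i

noncomputable def expandPoly (N : ℕ) : ℤ[X] := ∑ i ∈ range N, X ^ i - X ^ N

lemma expandPoly_ne_zero : expandPoly N ≠ 0 := by
  intro h
  have := congrArg (coeff · N) h
  simp [expandPoly, coeff_X_pow] at this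

lemma indicatorPoly_expand (hk : CanExpand N x k) :
    indicatorPoly (expand N x k) = indicatorPoly x + X ^ k * expandPoly N := by
  have h := sum_expand_add hk (X ^ · : ℕ → ℤ[X])
  rw [sum_Ico_eq_sum_range, add_tsub_cancel_left] at h
  simp only [pow_add, ← mul_sum] at h
  unfold indicatorPoly expandPoly
  linear_combination h

lemma coeff_sum_X_pow (c : Multiset ℕ) (j : ℕ) :
    ((c.map (X ^ · : ℕ → ℤ[X])).sum).coeff j = c.count j := by
  induction c using Multiset.induction_on with
  | empty => simp
  | cons a c ih =>
    simp only [Multiset.map_cons, Multiset.sum_cons, coeff_add, ih, coeff_X_pow,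
      Multiset.count_cons]
    split_ifs <;> simp_all [add_comm]

lemma Descends.indicatorPoly_eq (h : Descends N x c y) :
    indicatorPoly y = indicatorPoly x + (c.map (X ^ · : ℕ → ℤ[X])).sum * expandPoly N := by
  obtain ⟨l, hl, rfl⟩ := h
  induction hl with
  | nil => simp
  | cons hk _ ih =>
    rw [ih, indicatorPoly_expand hk]
    simp only [← Multiset.cons_coe, Multiset.map_cons, Multiset.sum_cons]
    ring

/-- `c` is recovered from the endpoints as `(indicatorPoly y - indicatorPoly x) / expandPoly N`. -/
lemma Descends.counts_eq (h : Descends N x c y) (h' : Descends N x d y) : c = d := by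
  have hpoly := h.indicatorPoly_eq.symm.trans h'.indicatorPoly_eq
  rw [add_right_inj] at hpoly
  have hsum := mul_right_cancel₀ expandPoly_ne_zero hpoly
  ext j
  exact_mod_cast (coeff_sum_X_pow c j).symm.trans ((congrArg (coeff · j) hsum).trans
    (coeff_sum_X_pow d j))

def NoNConsecutive (N : ℕ) (a : Finset ℕ) : Prop :=
  ∀ k, 1 ≤ k → ¬ Ico k (k + N) ⊆ a

lemma NoNConsecutive.mono (hb : NoNConsecutive N b) (hab : a ⊆ b) : NoNConsecutive N a :=
  fun k hk hsub => hb k hk (hsub.trans hab)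

/-- A block of `N` consecutive indices that cannot be collapsed forces the next index, so the
block could be shifted upward forever. -/
lemma noNConsecutive_of_forall_not_canCollapse (h : ∀ k, ¬ CanCollapse N a k) :
    NoNConsecutive N a := by
  intro k hk hsub
  have hshift : ∀ d, Ico (k + d) (k + d + N) ⊆ a ∧ k + d + N ∈ a := by
    intro d
    induction d with
    | zero =>
      refine ⟨hsub, by_contra fun hkN => h k ⟨hk, hkN, fun i hi => hsub hi⟩⟩
    | succ d ih =>
      have hwin : Ico (k + (d + 1)) (k + (d + 1) + N) ⊆ a := by
        intro i hi
        rw [mem_Ico] at hi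
        by_cases hi' : i < k + d + N
        · exact ih.1 (mem_Ico.2 ⟨by omega, hi'⟩)
        · obtain rfl : i = k + d + N := by omega
          exact ih.2
      refine ⟨hwin, by_contra fun hkN => h (k + (d + 1)) ⟨by omega, hkN, fun i hi => hwin hi⟩⟩
  have := le_sup (f := id) (hshift (a.sup id)).2
  simp only [id] at this
  omega

lemma sum_lt_of_noNConsecutive (hN : 2 ≤ N) (hA : QuasiFib N A) {m : ℕ} (hm : 1 ≤ m)
    {F : Finset ℕ} (hF : ∀ i ∈ F, 1 ≤ i ∧ i < m) (hz : NoNConsecutive N F) :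
    ∑ i ∈ F, A i < A m := by
  induction m using Nat.strong_induction_on generalizing F with
  | _ m ih =>
  rcases le_or_gt m N with hmN | hmN
  · calc ∑ i ∈ F, A i ≤ ∑ i ∈ Icc 1 (m - 1), A i :=
          sum_le_sum_of_subset fun i hi => mem_Icc.2 ⟨(hF i hi).1, by have := (hF i hi).2; omega⟩
      _ < A m := hA.2.2 m hm hmN
  -- split `F` at an index `j` of the window `[m - N, m)` that is missing from `F`
  obtain ⟨j, hjwin, hjF⟩ := not_subset.1 (hz (m - N) (by omega))
  rw [mem_Ico, Nat.sub_add_cancel hmN.le] at hjwin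
  have hlow : ∑ i ∈ F.filter (· < j), A i < A j :=
    ih j hjwin.2 (by omega) (fun i hi => ⟨(hF i (mem_filter.1 hi).1).1, (mem_filter.1 hi).2⟩)
      (hz.mono (filter_subset _ _))
  have hhigh : ∑ i ∈ F.filter (¬ · < j), A i ≤ ∑ i ∈ Ico (j + 1) m, A i := by
    refine sum_le_sum_of_subset fun i hi => ?_
    obtain ⟨hiF, hij⟩ := mem_filter.1 hi
    have : i ≠ j := fun h => hjF (h ▸ hiF)
    exact mem_Ico.2 ⟨by omega, (hF i hiF).2⟩
  have hwindow : ∑ i ∈ Ico j m, A i ≤ ∑ i ∈ Ico (m - N) m, A i :=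
    sum_le_sum_of_subset fun i hi => by simp only [mem_Ico] at hi ⊢; omega
  rw [sum_eq_sum_Ico_succ_bot hjwin.2] at hwindow
  have hrec := hA.sum_Ico_eq (by omega) (show 1 ≤ m - N by omega)
  rw [Nat.sub_add_cancel hmN.le] at hrec
  rw [← sum_filter_add_sum_filter_not F (· < j)]
  omega

lemma lt_of_mem_of_sum_le (hN : 2 ≤ N) (hA : QuasiFib N A) {m : ℕ} (hm : 1 ≤ m)
    (ha : ∀ i ∈ a, 1 ≤ i ∧ i < m) (hza : NoNConsecutive N a) (hsum : ∑ i ∈ b, A i ≤ ∑ i ∈ a, A i)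
    {q : ℕ} (hq : q ∈ b) : q < m := by
  by_contra! hmq
  have h1 := sum_lt_of_noNConsecutive hN hA hm ha hza
  have h2 : A m ≤ A q := (hA.strictMonoOn hN).monotoneOn hm (hm.trans hmq) hmq
  have h3 : A q ≤ ∑ i ∈ b, A i := single_le_sum (fun _ _ => Nat.zero_le _) hq
  omega

/-- Zeckendorf-type uniqueness: the largest indices agree by `lt_of_mem_of_sum_le`, and one
recurses on the rest. -/
lemma eq_of_noNConsecutive (hN : 2 ≤ N) (hA : QuasiFib N A) (ha : ∀ i ∈ a, 1 ≤ i)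
    (hb : ∀ i ∈ b, 1 ≤ i) (hza : NoNConsecutive N a) (hzb : NoNConsecutive N b)
    (hsum : ∑ i ∈ a, A i = ∑ i ∈ b, A i) : a = b := by
  induction a using Finset.induction_on_max generalizing b with
  | empty =>
    symm
    rw [sum_empty, eq_comm, sum_eq_zero_iff] at hsum
    exact eq_empty_of_forall_notMem fun i hi => (hA.pos (hb i hi)).ne' (hsum i hi)
  | insert p s hs ih =>
    have hps : p ∉ s := fun h => (hs p h).false
    have hApos : 0 < A p := hA.pos (ha p (mem_insert_self p s))
    have hbne : b.Nonempty := by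
      rw [nonempty_iff_ne_empty]
      rintro rfl
      rw [sum_insert hps, sum_empty] at hsum
      omega
    have hbp : ∀ i ∈ b, i < p + 1 :=
      fun i hi => lt_of_mem_of_sum_le hN hA (by omega)
        (fun j hj => ⟨ha j hj, by rcases mem_insert.1 hj with rfl | hj <;> grind⟩) hza
        hsum.ge hi
    have hpb : p < b.max' hbne + 1 :=
      lt_of_mem_of_sum_le hN hA (by omega)
        (fun j hj => ⟨hb j hj, Nat.lt_succ_of_le (le_max' b j hj)⟩) hzb hsum.le
        (mem_insert_self p s)
    have hpmem : p ∈ b := by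
      have := hbp _ (max'_mem b hbne)
      rw [show p = b.max' hbne by omega]
      exact max'_mem b hbne
    rw [← insert_erase hpmem, ih (fun i hi => ha i (mem_insert_of_mem hi))
      (fun i hi => hb i (mem_of_mem_erase hi)) (hza.mono (subset_insert p s))
      (hzb.mono (erase_subset p b))]
    rw [← insert_erase hpmem, sum_insert hps, sum_insert (notMem_erase p b)] at hsum
    omega

lemma card_collapse (hk : CanCollapse N x k) : (collapse N x k).card + N = x.card + 1 := by
  have hsub : Ico k (k + N) ⊆ x := fun i hi => hk.2.2 i hi
  rw [collapse, card_insert_of_notMem (fun h => hk.2.1 (mem_sdiff.1 h).1),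
    card_sdiff_of_subset hsub, Nat.card_Ico, add_tsub_cancel_left]
  have := card_le_card hsub
  rw [Nat.card_Ico, add_tsub_cancel_left] at this
  omega

lemma exists_ascends_forall_not_canCollapse (hN : 2 ≤ N) (x : Finset ℕ) :
    ∃ T c, Ascends N x c T ∧ ∀ k, ¬ CanCollapse N T k := by
  induction hcard : x.card using Nat.strong_induction_on generalizing x with
  | _ m ih =>
  by_cases h : ∃ k, CanCollapse N x k
  · obtain ⟨k, hk⟩ := h
    have := card_collapse hk
    obtain ⟨T, c, hT, hirr⟩ := ih _ (by omega) (collapse N x k) rfl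
    exact ⟨T, _, (Reach.single hk).trans hT, hirr⟩
  · exact ⟨x, 0, Reach.zero_iff.2 rfl, not_exists.1 h⟩

lemma exists_top (hN : 2 ≤ N) (hA : QuasiFib N A) (hne : (SRep A n).Nonempty) :
    ∃ T ∈ SRep A n, ∀ a ∈ SRep A n, ∃ c, Descends N T c a := by
  have hcollapse (a) (ha : a ∈ SRep A n) :
      ∃ T c, Ascends N a c T ∧ T ∈ SRep A n ∧ NoNConsecutive N T := by
    obtain ⟨T, c, hT, hirr⟩ := exists_ascends_forall_not_canCollapse hN a
    exact ⟨T, c, hT, hT.mem_SRep (by omega) hA ha, noNConsecutive_of_forall_not_canCollapse hirr⟩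
  obtain ⟨a₀, ha₀⟩ := hne
  obtain ⟨T, -, -, hT, hzT⟩ := hcollapse a₀ ha₀
  refine ⟨T, hT, fun a ha => ?_⟩
  obtain ⟨T', c, hT'a, hT', hzT'⟩ := hcollapse a ha
  obtain rfl : T' = T :=
    eq_of_noNConsecutive hN hA hT'.1 hT.1 hzT' hzT (hT'.2.trans hT.2.symm)
  exact ⟨c, hT'a.descends⟩

lemma pge_iff_le (ha : Descends N T c a) (hb : Descends N T d b) : pge N a b ↔ c ≤ d := by
  rw [pge_iff]
  constructor
  · rintro ⟨e, hab⟩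
    rw [← Descends.counts_eq (ha.trans hab) hb]
    exact Multiset.le_add_right c e
  · intro hcd
    obtain ⟨w, haw, hbw⟩ := ha.diamond movesCommute_expand hb
    rw [tsub_eq_zero_of_le hcd, Reach.zero_iff] at hbw
    exact ⟨_, hbw ▸ haw⟩

lemma exists_descends_union (ha : Descends N T c a) (hb : Descends N T d b) :
    ∃ s, Descends N T (c ∪ d) s := by
  obtain ⟨w, haw, -⟩ := ha.diamond movesCommute_expand hb
  rw [Multiset.union_comm, Multiset.union_def, add_comm]
  exact ⟨w, ha.trans haw⟩

lemma eq_of_pge_of_pge (hreach : ∀ a ∈ SRep A n, ∃ c, Descends N T c a) (ha : a ∈ SRep A n)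
    (hb : b ∈ SRep A n) (hab : pge N a b) (hba : pge N b a) : a = b := by
  obtain ⟨c, hc⟩ := hreach a ha
  obtain ⟨d, hd⟩ := hreach b hb
  have hcd := le_antisymm ((pge_iff_le hc hd).1 hab) ((pge_iff_le hd hc).1 hba)
  exact Reach.right_unique movesCommute_expand hc (hcd ▸ hd)

section Lattice

variable (hN : 2 ≤ N) (hA : QuasiFib N A) (hT : T ∈ SRep A n)
  (hreach : ∀ a ∈ SRep A n, ∃ c, Descends N T c a)
include hN hA hT hreach

/-- The join is found by climbing back up from the meet. -/
lemma exists_descends_inter (ha : Descends N T c a) (hb : Descends N T d b) :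
    ∃ s, Descends N T (c ∩ d) s := by
  obtain ⟨m, ham, hbm⟩ := ha.diamond movesCommute_expand hb
  obtain ⟨w, haw, -⟩ :=
    (Descends.ascends ham).diamond movesCommute_collapse (Descends.ascends hbm)
  obtain ⟨e, hw⟩ := hreach w (Ascends.mem_SRep (by omega) hA haw (ha.mem_SRep (by omega) hA hT))
  have hc := Descends.counts_eq (hw.trans (Ascends.descends haw)) ha
  have he : e = c ∩ d := by
    ext j
    have := congrArg (Multiset.count j) hc
    simp only [Multiset.count_add, Multiset.count_sub] at this
    rw [Multiset.count_inter]
    omega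
  exact ⟨w, he ▸ hw⟩

lemma isGLBin_iff (ha : Descends N T c a) (hb : Descends N T d b) :
    IsGLBin N (SRep A n) a b g ↔ Descends N T (c ∪ d) g := by
  constructor
  · rintro ⟨hg, hag, hbg, hglb⟩
    obtain ⟨e, he⟩ := hreach g hg
    obtain ⟨s, hs⟩ := exists_descends_union ha hb
    have hgs : pge N g s := hglb s (hs.mem_SRep (by omega) hA hT)
      ((pge_iff_le ha hs).2 Multiset.le_union_left) ((pge_iff_le hb hs).2 Multiset.le_union_right)
    have hecd : e = c ∪ d := le_antisymm ((pge_iff_le he hs).1 hgs)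
      (Multiset.union_le ((pge_iff_le ha he).1 hag) ((pge_iff_le hb he).1 hbg))
    exact hecd ▸ he
  · intro hg
    refine ⟨hg.mem_SRep (by omega) hA hT, (pge_iff_le ha hg).2 Multiset.le_union_left,
      (pge_iff_le hb hg).2 Multiset.le_union_right, fun x hx hax hbx => ?_⟩
    obtain ⟨e, he⟩ := hreach x hx
    exact (pge_iff_le hg he).2
      (Multiset.union_le ((pge_iff_le ha he).1 hax) ((pge_iff_le hb he).1 hbx))

lemma isLUBin_iff (ha : Descends N T c a) (hb : Descends N T d b) :
    IsLUBin N (SRep A n) a b g ↔ Descends N T (c ∩ d) g := by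
  constructor
  · rintro ⟨hg, hga, hgb, hlub⟩
    obtain ⟨e, he⟩ := hreach g hg
    obtain ⟨s, hs⟩ := exists_descends_inter hN hA hT hreach ha hb
    have hsg : pge N s g := hlub s (hs.mem_SRep (by omega) hA hT)
      ((pge_iff_le hs ha).2 Multiset.inter_le_left) ((pge_iff_le hs hb).2 Multiset.inter_le_right)
    have hecd : e = c ∩ d := le_antisymm
      (Multiset.le_inter ((pge_iff_le he ha).1 hga) ((pge_iff_le he hb).1 hgb))
      ((pge_iff_le hs he).1 hsg)
    exact hecd ▸ he
  · intro hg
    refine ⟨hg.mem_SRep (by omega) hA hT, (pge_iff_le hg ha).2 Multiset.inter_le_left,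
      (pge_iff_le hg hb).2 Multiset.inter_le_right, fun x hx hxa hxb => ?_⟩
    obtain ⟨e, he⟩ := hreach x hx
    exact (pge_iff_le he hg).2
      (Multiset.le_inter ((pge_iff_le he ha).1 hxa) ((pge_iff_le he hb).1 hxb))

lemma exists_isLUBin (ha : a ∈ SRep A n) (hb : b ∈ SRep A n) :
    ∃ s, IsLUBin N (SRep A n) a b s := by
  obtain ⟨c, hc⟩ := hreach a ha
  obtain ⟨d, hd⟩ := hreach b hb
  obtain ⟨s, hs⟩ := exists_descends_inter hN hA hT hreach hc hd
  exact ⟨s, (isLUBin_iff hN hA hT hreach hc hd).2 hs⟩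

lemma exists_isGLBin (ha : a ∈ SRep A n) (hb : b ∈ SRep A n) :
    ∃ s, IsGLBin N (SRep A n) a b s := by
  obtain ⟨c, hc⟩ := hreach a ha
  obtain ⟨d, hd⟩ := hreach b hb
  obtain ⟨s, hs⟩ := exists_descends_union hc hd
  exact ⟨s, (isGLBin_iff hN hA hT hreach hc hd).2 hs⟩

lemma isLUBin_isGLBin_modular {m u j w : Finset ℕ} (hx : x ∈ SRep A n) (hy : y ∈ SRep A n)
    (hz : z ∈ SRep A n) (hzx : pge N z x) (hm : IsGLBin N (SRep A n) y z m)
    (hu : IsLUBin N (SRep A n) x m u) (hj : IsLUBin N (SRep A n) x y j)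
    (hw : IsGLBin N (SRep A n) j z w) : u = w := by
  obtain ⟨cx, hcx⟩ := hreach x hx
  obtain ⟨cy, hcy⟩ := hreach y hy
  obtain ⟨cz, hcz⟩ := hreach z hz
  have hcm := (isGLBin_iff hN hA hT hreach hcy hcz).1 hm
  have hcu := (isLUBin_iff hN hA hT hreach hcx hcm).1 hu
  have hcj := (isLUBin_iff hN hA hT hreach hcx hcy).1 hj
  have hcw := (isGLBin_iff hN hA hT hreach hcj hcz).1 hw
  -- the multisets of expansions form a distributive, hence modular, lattice
  have hmod : cx ∩ (cy ∪ cz) = cx ∩ cy ∪ cz :=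
    (inf_sup_assoc_of_le cy ((pge_iff_le hcz hcx).1 hzx)).symm
  exact Reach.right_unique movesCommute_expand hcu (hmod ▸ hcw)

end Lattice

end QuasiFib

open QuasiFib in
theorem stmt_15_general (N : ℕ) (hN : 2 ≤ N) (A : ℕ → ℕ) (hA : QuasiFib N A)
    (n : ℕ) (hne : (SRep A n).Nonempty) :
    (∀ a ∈ SRep A n, pge N a a) ∧
    (∀ a ∈ SRep A n, ∀ b ∈ SRep A n, ∀ c ∈ SRep A n,
      pge N a b → pge N b c → pge N a c) ∧
    (∀ a ∈ SRep A n, ∀ b ∈ SRep A n, pge N a b → pge N b a → a = b) ∧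
    (∀ a ∈ SRep A n, ∀ b ∈ SRep A n, ∃ s, IsLUBin N (SRep A n) a b s) ∧
    (∀ a ∈ SRep A n, ∀ b ∈ SRep A n, ∃ s, IsGLBin N (SRep A n) a b s) ∧
    (∀ x ∈ SRep A n, ∀ y ∈ SRep A n, ∀ z ∈ SRep A n, pge N z x →
      ∀ m, IsGLBin N (SRep A n) y z m →
        ∀ u, IsLUBin N (SRep A n) x m u →
          ∀ j, IsLUBin N (SRep A n) x y j →
            ∀ w, IsGLBin N (SRep A n) j z w → u = w) := by
  obtain ⟨T, hT, hreach⟩ := exists_top hN hA hne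
  exact ⟨fun _ _ => .refl, fun _ _ _ _ _ _ => .trans,
    fun _ ha _ hb => eq_of_pge_of_pge hreach ha hb,
    fun _ ha _ hb => exists_isLUBin hN hA hT hreach ha hb,
    fun _ ha _ hb => exists_isGLBin hN hA hT hreach ha hb,
    fun _ hx _ hy _ hz hzx _ hm _ hu _ hj _ hw =>
      isLUBin_isGLBin_modular hN hA hT hreach hx hy hz hzx hm hu hj hw⟩

/-- Theorem 5.1: the reachability relation `≥` on `S_n` is a partial order, any two elements
have a least upper bound and a greatest lower bound, and the resulting lattice is modular:
whenever `x ≤ z`, one has `x ∨ (y ∧ z) = (x ∨ y) ∧ z`. -/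
theorem stmt_15 (N : ℕ) (hN : 2 ≤ N) (A : ℕ → ℕ) (hA : QuasiFib N A)
    (n : ℕ) (hn : 1 ≤ n) (hne : (SRep A n).Nonempty) :
    (∀ a ∈ SRep A n, pge N a a) ∧
    (∀ a ∈ SRep A n, ∀ b ∈ SRep A n, ∀ c ∈ SRep A n,
      pge N a b → pge N b c → pge N a c) ∧
    (∀ a ∈ SRep A n, ∀ b ∈ SRep A n, pge N a b → pge N b a → a = b) ∧
    (∀ a ∈ SRep A n, ∀ b ∈ SRep A n, ∃ s, IsLUBin N (SRep A n) a b s) ∧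
    (∀ a ∈ SRep A n, ∀ b ∈ SRep A n, ∃ s, IsGLBin N (SRep A n) a b s) ∧
    (∀ x ∈ SRep A n, ∀ y ∈ SRep A n, ∀ z ∈ SRep A n, pge N z x →
      ∀ m, IsGLBin N (SRep A n) y z m →
        ∀ u, IsLUBin N (SRep A n) x m u →
          ∀ j, IsLUBin N (SRep A n) x y j →
            ∀ w, IsGLBin N (SRep A n) j z w → u = w) :=
  stmt_15_general N hN A hA n hne
end

section
/- Let N ≥ 2 be an EVEN integer and let A_1, A_2, … be a quasifibonacci sequence of level N. Then for every positive integer n with A_k ≤ n < A_{k+1} for some k ≥ 1, each of the quantities f_n = Σ_{a∈T_n} σ(a), g_n = Σ_{a∈R_n} σ(a), and h_n = Σ_{a∈S_n} σ(a) lies in {−1, 0, 1}. -/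
/-- the signed count `Σ_{a ∈ S} σ(a)` where `σ(a) = (-1)^{number of ones of a}`
(a finite sum since `S` is finite; empty sums are `0`). -/
noncomputable def sgnSum (S : Set (Finset ℕ)) : ℤ := ∑ᶠ F ∈ S, (-1 : ℤ) ^ F.card


namespace QF

set_option linter.unusedSectionVars false

variable {A : ℕ → ℕ}

/-- partial sum over `Ico a b` -/
def PS (A : ℕ → ℕ) (a b : ℕ) : ℕ := ∑ i ∈ Finset.Ico a b, A i

def Reps (A : ℕ → ℕ) (x b : ℕ) : Finset (Finset ℕ) :=
  ((Finset.Icc 1 b).powerset).filter fun F => (∑ i ∈ F, A i) = x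

def Th (A : ℕ → ℕ) (x b : ℕ) : ℤ := ∑ F ∈ Reps A x b, (-1 : ℤ) ^ F.card

def hh (A : ℕ → ℕ) (x : ℕ) : ℤ := Th A x x

def B (z : ℤ) : Prop := z = -1 ∨ z = 0 ∨ z = 1

lemma PS_single (a : ℕ) : PS A a (a+1) = A a := by
  simp [PS]

lemma PS_split {a b c : ℕ} (h1 : a ≤ b) (h2 : b ≤ c) :
    PS A a c = PS A a b + PS A b c := by
  rw [PS, PS, PS, Finset.sum_Ico_consecutive _ h1 h2]

lemma PS_mono_left {a a' b : ℕ} (h : a' ≤ a) : PS A a b ≤ PS A a' b :=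
  Finset.sum_le_sum_of_subset (Finset.Ico_subset_Ico h le_rfl)

lemma single_le_PS {a i b : ℕ} (h1 : a ≤ i) (h2 : i < b) : A i ≤ PS A a b :=
  Finset.single_le_sum (fun j _ => Nat.zero_le (A j)) (Finset.mem_Ico.2 ⟨h1, h2⟩)

lemma PS_empty {a b : ℕ} (h : b ≤ a) : PS A a b = 0 := by
  rw [PS, Finset.Ico_eq_empty (by omega), Finset.sum_empty]

section Basics

variable {N : ℕ} (hN : 2 ≤ N)
  (hpos : ∀ i, 1 ≤ i → 0 < A i)
  (hrec : ∀ k, 1 ≤ k → A (k + N) = PS A k (k + N))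
  (hdom : ∀ k, 1 ≤ k → k ≤ N → PS A 1 k < A k)

include hN hpos hrec hdom

lemma A_lt_succ : ∀ j, 1 ≤ j → A j < A (j+1) := by
  intro j hj
  rcases le_or_gt (j+1) N with h | h
  · have h1 := hdom (j+1) (by omega) h
    have h2 : A j ≤ PS A 1 (j+1) := single_le_PS (by omega) (by omega)
    omega
  · obtain ⟨k, hk1, hk2⟩ : ∃ k, 1 ≤ k ∧ j + 1 = k + N := ⟨j+1-N, by omega, by omega⟩
    have h1 := hrec k hk1
    rw [← hk2] at h1
    have h2 : A k ≤ PS A k j := single_le_PS le_rfl (by omega)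
    have h3 : PS A k (j+1) = PS A k j + PS A j (j+1) := PS_split (by omega) (by omega)
    have h4 : PS A j (j+1) = A j := PS_single j
    have h5 := hpos k hk1
    omega

lemma A_mono : ∀ i j, 1 ≤ i → i ≤ j → A i ≤ A j := by
  intro i j hi hij
  induction j, hij using Nat.le_induction with
  | base => exact le_rfl
  | succ j hij ih =>
    have h2 := A_lt_succ hN hpos hrec hdom j (by omega)
    omega

lemma A_ge_id : ∀ j, j ≤ A j := by
  intro j
  induction j with
  | zero => omega
  | succ j ih =>
    rcases Nat.eq_zero_or_pos j with h | h
    · subst h; exact hpos 1 le_rfl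
    · have := A_lt_succ hN hpos hrec hdom j h
      omega

/-- A (shifted) recurrence: `A (k+N) = PS A k (k+N)` in subtraction-free form. -/
lemma rec' {b : ℕ} (h : N + 1 ≤ b) : A b = PS A (b - N) b := by
  obtain ⟨k, hk1, hk2⟩ : ∃ k, 1 ≤ k ∧ b = k + N := ⟨b-N, by omega, by omega⟩
  have h1 := hrec k hk1
  rw [← hk2] at h1
  rw [show b - N = k by omega]
  exact h1

/-- L1 : `PS 1 j < A (j+1)`, i.e. `A₁ + ⋯ + A_{j-1} < A_{j+1}`. -/
lemma L1 : ∀ j, PS A 1 j < A (j+1) := by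
  intro j
  induction j using Nat.strong_induction_on with
  | _ j ih =>
    rcases Nat.eq_zero_or_pos j with h0 | h0
    · subst h0
      simpa [PS] using hpos 1 le_rfl
    rcases le_or_gt j N with h | h
    · have h1 := hdom j h0 h
      have h2 := A_lt_succ hN hpos hrec hdom j h0
      omega
    · have hsplit : PS A 1 j = PS A 1 (j-N) + PS A (j-N) j :=
        PS_split (by omega) (by omega)
      have hA : A j = PS A (j-N) j := rec' hN hpos hrec hdom (by omega)
      have ih1 : PS A 1 (j-N) < A (j-N+1) := ih (j-N) (by omega)
      have h2 : A (j+1) = PS A (j+1-N) (j+1) := rec' hN hpos hrec hdom (by omega)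
      have h3 : PS A (j+1-N) (j+1) = PS A (j+1-N) j + PS A j (j+1) :=
        PS_split (by omega) (by omega)
      have h4 : PS A j (j+1) = A j := PS_single j
      have h5 : A (j-1) ≤ PS A (j+1-N) j := single_le_PS (by omega) (by omega)
      have h6 : A (j-N+1) ≤ A (j-1) := A_mono hN hpos hrec hdom _ _ (by omega) (by omega)
      omega

lemma ADD2 {a : ℕ} (ha : 1 ≤ a) : A a + A (a+1) ≤ A (a+2) := by
  rcases le_or_gt (a+2) N with h | h
  · have h1 := hdom (a+2) (by omega) h
    have hs1 : PS A 1 (a+2) = PS A 1 a + PS A a (a+2) := PS_split (by omega) (by omega)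
    have hs2 : PS A a (a+2) = PS A a (a+1) + PS A (a+1) (a+2) := PS_split (by omega) (by omega)
    have e1 : PS A a (a+1) = A a := PS_single a
    have e2 : PS A (a+1) (a+2) = A (a+1) := PS_single (a+1)
    omega
  · have h2 : A (a+2) = PS A (a+2-N) (a+2) := rec' hN hpos hrec hdom (by omega)
    have hs1 : PS A (a+2-N) (a+2) = PS A (a+2-N) a + PS A a (a+2) := PS_split (by omega) (by omega)
    have hs2 : PS A a (a+2) = PS A a (a+1) + PS A (a+1) (a+2) := PS_split (by omega) (by omega)
    have e1 : PS A a (a+1) = A a := PS_single a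
    have e2 : PS A (a+1) (a+2) = A (a+1) := PS_single (a+1)
    omega

/-- sum of at most `N` consecutive terms ending at `b` is at most `A b`. -/
lemma sum_le_A {a b : ℕ} (ha : 1 ≤ a) (hb : b ≤ a + N) : PS A a b ≤ A b := by
  rcases le_or_gt b a with h | h
  · have := PS_empty (A := A) h
    omega
  rcases le_or_gt b N with h2 | h2
  · have h3 := hdom b (by omega) h2
    have h4 : PS A a b ≤ PS A 1 b := PS_mono_left (by omega)
    omega
  · have h3 : A b = PS A (b-N) b := rec' hN hpos hrec hdom (by omega)
    have h4 : PS A a b ≤ PS A (b-N) b := PS_mono_left (by omega)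
    omega

end Basics
section SetSide

open Finset

variable {N : ℕ} (hN : 2 ≤ N)
  (hpos : ∀ i, 1 ≤ i → 0 < A i)
  (hrec : ∀ k, 1 ≤ k → A (k + N) = PS A k (k + N))
  (hdom : ∀ k, 1 ≤ k → k ≤ N → PS A 1 k < A k)

lemma PS_mono_right {a b b' : ℕ} (h : b ≤ b') : PS A a b ≤ PS A a b' :=
  Finset.sum_le_sum_of_subset (Finset.Ico_subset_Ico le_rfl h)

lemma mem_Reps {x b : ℕ} {F : Finset ℕ} :
    F ∈ Reps A x b ↔ F ⊆ Finset.Icc 1 b ∧ (∑ i ∈ F, A i) = x := by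
  simp [Reps]

include hpos in
lemma S1 (b : ℕ) : Th A 0 b = 1 := by
  classical
  have : Reps A 0 b = {∅} := by
    ext F
    rw [mem_Reps, Finset.mem_singleton]
    constructor
    · rintro ⟨hsub, hsum⟩
      by_contra hne
      obtain ⟨i, hi⟩ := Finset.nonempty_iff_ne_empty.2 hne
      have hi1 : 1 ≤ i := (Finset.mem_Icc.1 (hsub hi)).1
      have h1 : A i ≤ ∑ j ∈ F, A j :=
        Finset.single_le_sum (fun j _ => Nat.zero_le (A j)) hi
      have h2 := hpos i hi1
      omega
    · rintro rfl
      exact ⟨Finset.empty_subset _, Finset.sum_empty⟩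
  rw [Th, this, Finset.sum_singleton, Finset.card_empty, pow_zero]

lemma S3 {x b : ℕ} (h : PS A 1 (b+1) < x) : Th A x b = 0 := by
  have : Reps A x b = ∅ := by
    rw [Finset.eq_empty_iff_forall_notMem]
    intro F hF
    rw [mem_Reps] at hF
    obtain ⟨hsub, hsum⟩ := hF
    have h1 : (∑ i ∈ F, A i) ≤ ∑ i ∈ Finset.Icc 1 b, A i :=
      Finset.sum_le_sum_of_subset hsub
    have h2 : (∑ i ∈ Finset.Icc 1 b, A i) = PS A 1 (b+1) := by
      rw [PS, Finset.Ico_add_one_right_eq_Icc]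
    omega
  rw [Th, this, Finset.sum_empty]

include hN hpos hrec hdom in
lemma S7 {x b : ℕ} (h1 : 1 ≤ x) (h2 : x < A 1) : Th A x b = 0 := by
  have : Reps A x b = ∅ := by
    rw [Finset.eq_empty_iff_forall_notMem]
    intro F hF
    rw [mem_Reps] at hF
    obtain ⟨hsub, hsum⟩ := hF
    rcases Finset.eq_empty_or_nonempty F with rfl | ⟨i, hi⟩
    · simp at hsum; omega
    · have hi1 : 1 ≤ i := (Finset.mem_Icc.1 (hsub hi)).1
      have h3 : A 1 ≤ A i := A_mono hN hpos hrec hdom 1 i le_rfl hi1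
      have h4 : A i ≤ ∑ j ∈ F, A j :=
        Finset.single_le_sum (fun j _ => Nat.zero_le (A j)) hi
      omega
  rw [Th, this, Finset.sum_empty]

lemma step_up {x b : ℕ} (h : x < A (b+1)) : Th A x (b+1) = Th A x b := by
  have : Reps A x (b+1) = Reps A x b := by
    ext F
    rw [mem_Reps, mem_Reps]
    constructor
    · rintro ⟨hsub, hsum⟩
      refine ⟨fun i hi => ?_, hsum⟩
      have h1 := Finset.mem_Icc.1 (hsub hi)
      have h2 : i ≠ b + 1 := by
        rintro rfl
        have h3 : A (b+1) ≤ ∑ j ∈ F, A j :=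
          Finset.single_le_sum (fun j _ => Nat.zero_le (A j)) hi
        omega
      exact Finset.mem_Icc.2 ⟨h1.1, by omega⟩
    · rintro ⟨hsub, hsum⟩
      exact ⟨hsub.trans (Finset.Icc_subset_Icc le_rfl (by omega)), hsum⟩
  rw [Th, Th, this]

include hN hpos hrec hdom in
lemma S4 {x b b' : ℕ} (h : x < A (b+1)) (hbb : b ≤ b') : Th A x b' = Th A x b := by
  induction b', hbb using Nat.le_induction with
  | base => rfl
  | succ b' hbb ih =>
    rw [← ih]
    apply step_up
    calc x < A (b+1) := h
      _ ≤ A (b'+1) := A_mono hN hpos hrec hdom _ _ (by omega) (by omega)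

include hN hpos hrec hdom in
lemma stab {x b : ℕ} (h : x < A (b+1)) : Th A x b = hh A x := by
  rcases le_or_gt b x with hbx | hbx
  · exact (S4 hN hpos hrec hdom h hbx).symm
  · have h2 : x < A (x+1) := by
      have := A_ge_id hN hpos hrec hdom (x+1)
      omega
    exact S4 hN hpos hrec hdom h2 (by omega)

/-- The master splitting identity. -/
lemma S5b (x b : ℕ) : Th A (x + A (b+1)) (b+1) = Th A (x + A (b+1)) b - Th A x b := by
  classical
  set y := x + A (b+1) with hy
  have hsplit :
      (∑ F ∈ (Reps A y (b+1)).filter (fun F => (b+1) ∈ F), (-1:ℤ)^F.card) +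
      (∑ F ∈ (Reps A y (b+1)).filter (fun F => (b+1) ∉ F), (-1:ℤ)^F.card) = Th A y (b+1) :=
    Finset.sum_filter_add_sum_filter_not _ _ _
  have h1 : (Reps A y (b+1)).filter (fun F => (b+1) ∉ F) = Reps A y b := by
    ext F
    simp only [Finset.mem_filter, mem_Reps]
    constructor
    · rintro ⟨⟨hsub, hsum⟩, hnm⟩
      refine ⟨fun i hi => ?_, hsum⟩
      have h2 := Finset.mem_Icc.1 (hsub hi)
      have h3 : i ≠ b + 1 := fun he => hnm (he ▸ hi)
      exact Finset.mem_Icc.2 ⟨h2.1, by omega⟩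
    · rintro ⟨hsub, hsum⟩
      refine ⟨⟨hsub.trans (Finset.Icc_subset_Icc le_rfl (by omega)), hsum⟩, fun hmem => ?_⟩
      have := Finset.mem_Icc.1 (hsub hmem)
      omega
  have h2 : (∑ F ∈ (Reps A y (b+1)).filter (fun F => (b+1) ∈ F), (-1:ℤ)^F.card)
      = ∑ G ∈ Reps A x b, (-(-1:ℤ)^G.card) := by
    refine Finset.sum_bij' (fun F _ => F.erase (b+1)) (fun G _ => insert (b+1) G)
      ?_ ?_ ?_ ?_ ?_
    · -- hi : erase lands in Reps A x b
      intro F hF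
      simp only [Finset.mem_filter, mem_Reps] at hF
      obtain ⟨⟨hsub, hsum⟩, hmem⟩ := hF
      rw [mem_Reps]
      constructor
      · intro i hi
        have h3 := Finset.mem_erase.1 hi
        have h4 := Finset.mem_Icc.1 (hsub h3.2)
        exact Finset.mem_Icc.2 ⟨h4.1, by omega⟩
      · have h5 : (∑ i ∈ F.erase (b+1), A i) + A (b+1) = ∑ i ∈ F, A i :=
          Finset.sum_erase_add _ _ hmem
        omega
    · -- hj : insert lands in the filtered set
      intro G hG
      rw [mem_Reps] at hG
      obtain ⟨hsub, hsum⟩ := hG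
      have hnm : (b+1) ∉ G := by
        intro hmem
        have := Finset.mem_Icc.1 (hsub hmem)
        omega
      simp only [Finset.mem_filter, mem_Reps]
      refine ⟨⟨?_, ?_⟩, Finset.mem_insert_self _ _⟩
      · intro i hi
        rcases Finset.mem_insert.1 hi with rfl | hi'
        · exact Finset.mem_Icc.2 ⟨by omega, le_rfl⟩
        · have := Finset.mem_Icc.1 (hsub hi')
          exact Finset.mem_Icc.2 ⟨this.1, by omega⟩
      · rw [Finset.sum_insert hnm]
        omega
    · -- left_inv
      intro F hF
      simp only [Finset.mem_filter] at hF
      exact Finset.insert_erase hF.2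
    · -- right_inv
      intro G hG
      rw [mem_Reps] at hG
      have hnm : (b+1) ∉ G := by
        intro hmem
        have := Finset.mem_Icc.1 (hG.1 hmem)
        omega
      exact Finset.erase_insert hnm
    · -- values
      intro F hF
      simp only [Finset.mem_filter] at hF
      have hcard : F.card = (F.erase (b+1)).card + 1 := by
        rw [Finset.card_erase_of_mem hF.2]
        have : 1 ≤ F.card := Finset.card_pos.2 ⟨b+1, hF.2⟩
        omega
      rw [hcard, pow_succ]
      ring
  have h3 : (∑ G ∈ Reps A x b, (-(-1:ℤ)^G.card)) = - Th A x b := by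
    rw [Th, Finset.sum_neg_distrib]
  have h4 : Th A y b = ∑ F ∈ Reps A y b, (-1:ℤ)^F.card := rfl
  rw [← hsplit, h1, h2, h3]
  omega

end SetSide
section Derived

open Finset

variable {N : ℕ} (hN : 2 ≤ N)
  (hpos : ∀ i, 1 ≤ i → 0 < A i)
  (hrec : ∀ k, 1 ≤ k → A (k + N) = PS A k (k + N))
  (hdom : ∀ k, 1 ≤ k → k ≤ N → PS A 1 k < A k)

include hN hpos hrec hdom

lemma VB {x b : ℕ} (h : A (b+2) ≤ x) : Th A x b = 0 :=
  S3 (lt_of_lt_of_le (L1 hN hpos hrec hdom (b+1)) h)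

lemma Rg {x b : ℕ} (h : A (b+2) ≤ x + A (b+1)) :
    Th A (x + A (b+1)) (b+1) = - Th A x b := by
  rw [S5b]
  have h0 : Th A (x + A (b+1)) b = 0 := by
    apply S3
    have h1 := L1 hN hpos hrec hdom (b+1)
    have h2 : A (b+1+1) = A (b+2) := rfl
    omega
  omega

lemma Rh {m p c b : ℕ} (hcb : c + 2 ≤ b) (hmp : m + A (c+2) = p + A (c+1))
    (hup : m + A (c+2) < A (c+3)) :
    Th A (m + A (c+2)) b = - Th A m (c+1) - Th A p c := by
  rw [hmp] at hup ⊢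
  have h1 : Th A (p + A (c+1)) b = Th A (p + A (c+1)) (c+2) :=
    S4 hN hpos hrec hdom hup hcb
  have e1 := S5b (A := A) m (c+1)
  rw [hmp] at e1
  have e2 := S5b (A := A) p c
  have h0 : Th A (p + A (c+1)) c = 0 := by
    apply S3
    have h4 := L1 hN hpos hrec hdom (c+1)
    have h5 : A (c+1+1) = A (c+2) := rfl
    omega
  have b1 : Th A (p + A (c+1)) (c+1+1) = Th A (p + A (c+1)) (c+2) := rfl
  omega

lemma Rh1 {m b : ℕ} (h : m + A 1 < A 2) (hb : 1 ≤ b) : Th A (m + A 1) b = - Th A m 0 := by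
  have h1 : Th A (m + A 1) b = Th A (m + A 1) 1 := S4 hN hpos hrec hdom h hb
  have e1 := S5b (A := A) m 0
  have h0 : Th A (m + A 1) 0 = 0 := by
    apply S3
    have h2 : PS A 1 1 = 0 := PS_empty le_rfl
    have h3 := hpos 1 le_rfl
    have h4 : PS A 1 (0+1) = PS A 1 1 := rfl
    omega
  have b1 : Th A (m + A (0+1)) (0+1) = Th A (m + A 1) 1 := rfl
  have b2 : Th A (m + A (0+1)) 0 = Th A (m + A 1) 0 := rfl
  have b3 : Th A m 0 = Th A m 0 := rfl
  omega

omit hN hrec in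
lemma inj_aux : ∀ b, b + 1 ≤ N → ∀ F G : Finset ℕ, F ⊆ Finset.Icc 1 b → G ⊆ Finset.Icc 1 b →
    (∑ i ∈ F, A i) = (∑ i ∈ G, A i) → F = G := by
  intro b
  induction b with
  | zero =>
    intro _ F G hF hG _
    have he : Finset.Icc 1 0 = (∅ : Finset ℕ) := by simp
    rw [he, Finset.subset_empty] at hF hG
    rw [hF, hG]
  | succ b ih =>
    intro hb F G hF hG hsum
    have key : ∀ F' G' : Finset ℕ, F' ⊆ Finset.Icc 1 (b+1) → G' ⊆ Finset.Icc 1 (b+1) →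
        (∑ i ∈ F', A i) = (∑ i ∈ G', A i) → (b+1) ∈ F' → (b+1) ∉ G' → False := by
      intro F' G' hF' hG' hs hmF hmG
      have h1 : A (b+1) ≤ ∑ i ∈ F', A i :=
        Finset.single_le_sum (fun j _ => Nat.zero_le (A j)) hmF
      have h2 : (∑ i ∈ G', A i) ≤ PS A 1 (b+1) := by
        apply Finset.sum_le_sum_of_subset
        intro i hi
        have h3 := Finset.mem_Icc.1 (hG' hi)
        have h4 : i ≠ b+1 := fun he => hmG (he ▸ hi)
        exact Finset.mem_Ico.2 ⟨h3.1, by omega⟩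
      have h3 := hdom (b+1) (by omega) (by omega)
      omega
    by_cases hFb : (b+1) ∈ F <;> by_cases hGb : (b+1) ∈ G
    · have e1 := Finset.sum_erase_add F A hFb
      have e2 := Finset.sum_erase_add G A hGb
      have hs : (∑ i ∈ F.erase (b+1), A i) = ∑ i ∈ G.erase (b+1), A i := by omega
      have hFe : F.erase (b+1) ⊆ Finset.Icc 1 b := by
        intro i hi
        have h3 := Finset.mem_erase.1 hi
        have h4 := Finset.mem_Icc.1 (hF h3.2)
        exact Finset.mem_Icc.2 ⟨h4.1, by omega⟩
      have hGe : G.erase (b+1) ⊆ Finset.Icc 1 b := by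
        intro i hi
        have h3 := Finset.mem_erase.1 hi
        have h4 := Finset.mem_Icc.1 (hG h3.2)
        exact Finset.mem_Icc.2 ⟨h4.1, by omega⟩
      have he := ih (by omega) _ _ hFe hGe hs
      calc F = insert (b+1) (F.erase (b+1)) := (Finset.insert_erase hFb).symm
        _ = insert (b+1) (G.erase (b+1)) := by rw [he]
        _ = G := Finset.insert_erase hGb
    · exact (key F G hF hG hsum hFb hGb).elim
    · exact (key G F hG hF hsum.symm hGb hFb).elim
    · apply ih (by omega) F G ?_ ?_ hsum
      · intro i hi
        have h3 := Finset.mem_Icc.1 (hF hi)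
        have h4 : i ≠ b+1 := fun he => hFb (he ▸ hi)
        exact Finset.mem_Icc.2 ⟨h3.1, by omega⟩
      · intro i hi
        have h3 := Finset.mem_Icc.1 (hG hi)
        have h4 : i ≠ b+1 := fun he => hGb (he ▸ hi)
        exact Finset.mem_Icc.2 ⟨h3.1, by omega⟩

lemma UC {c : ℕ} (hc : c + 1 ≤ N) : hh A (PS A 1 (c+1)) = (-1:ℤ)^c := by
  classical
  have hIcc : Finset.Icc 1 c = Finset.Ico 1 (c+1) := (Finset.Ico_add_one_right_eq_Icc 1 c).symm
  have hsum : (∑ i ∈ Finset.Icc 1 c, A i) = PS A 1 (c+1) := by rw [hIcc]; rfl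
  have hxN : PS A 1 (c+1) < A N := by
    have h1 : PS A 1 (c+1) ≤ PS A 1 N := PS_mono_right (by omega)
    have h2 := hdom N (by omega) le_rfl
    omega
  have hRe : Reps A (PS A 1 (c+1)) (PS A 1 (c+1)) = {Finset.Icc 1 c} := by
    ext F
    rw [mem_Reps, Finset.mem_singleton]
    constructor
    · rintro ⟨hsub, hsum'⟩
      apply inj_aux hpos hdom (N-1) (by omega) F (Finset.Icc 1 c) ?_ ?_ (by omega)
      · intro i hi
        have h1 := Finset.mem_Icc.1 (hsub hi)
        have h2 : A i ≤ ∑ j ∈ F, A j :=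
          Finset.single_le_sum (fun j _ => Nat.zero_le (A j)) hi
        have h3 : i < N := by
          by_contra hcon
          have h4 : A N ≤ A i := A_mono hN hpos hrec hdom N i (by omega) (by omega)
          omega
        exact Finset.mem_Icc.2 ⟨h1.1, by omega⟩
      · exact Finset.Icc_subset_Icc le_rfl (by omega)
    · rintro rfl
      refine ⟨?_, hsum⟩
      intro i hi
      have h1 := Finset.mem_Icc.1 hi
      have h2 : A i ≤ PS A 1 (c+1) := single_le_PS (by omega) (by omega)
      have h3 := A_ge_id hN hpos hrec hdom i
      exact Finset.mem_Icc.2 ⟨h1.1, by omega⟩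
  rw [hh, Th, hRe, Finset.sum_singleton, Nat.card_Icc]
  norm_num

end Derived
/-- the boundary family `u_t = (A_a - d) + (A_{a+1} + ⋯ + A_{a+t})`, with `e = A_a - d`. -/
def uu (A : ℕ → ℕ) (a e t : ℕ) : ℕ := e + PS A (a+1) (a+t+1)

section Family

open Finset

variable {N : ℕ} (hN : 2 ≤ N)
  (hpos : ∀ i, 1 ≤ i → 0 < A i)
  (hrec : ∀ k, 1 ≤ k → A (k + N) = PS A k (k + N))
  (hdom : ∀ k, 1 ≤ k → k ≤ N → PS A 1 k < A k)
  {a e : ℕ} (ha : 1 ≤ a) (he : e < A a)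

lemma uu_zero : uu A a e 0 = e := by
  rw [uu, PS_empty le_rfl]; omega


lemma uu_succ (t : ℕ) : uu A a e (t+1) = uu A a e t + A (a+t+1) := by
  rw [uu, uu, show a + (t+1) + 1 = a + t + 2 from by omega,
    PS_split (a := a+1) (b := a+t+1) (c := a+t+2) (by omega) (by omega)]
  have h1 : PS A (a+t+1) (a+t+2) = A (a+t+1) := PS_single (a+t+1)
  omega

lemma uu_mono {t t' : ℕ} (h : t ≤ t') : uu A a e t ≤ uu A a e t' := by
  rw [uu, uu]
  have := PS_mono_right (A := A) (a := a+1) (show a+t+1 ≤ a+t'+1 by omega)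
  omega

include hpos in
lemma uu_strict {t t' : ℕ} (h : t < t') : uu A a e t < uu A a e t' := by
  have h1 := uu_succ (A := A) (a := a) (e := e) t
  have h2 := uu_mono (A := A) (a := a) (e := e) (show t+1 ≤ t' by omega)
  have h3 := hpos (a+t+1) (by omega)
  omega

include hN hpos hrec hdom ha he in
lemma uu_lt {t : ℕ} (ht : t + 1 ≤ N) : uu A a e t < A (a+t+1) := by
  have h1 : PS A a (a+t+1) = A a + PS A (a+1) (a+t+1) := by
    rw [PS_split (a := a) (b := a+1) (c := a+t+1) (by omega) (by omega), PS_single]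
  have h2 : PS A a (a+t+1) ≤ A (a+t+1) := sum_le_A hN hpos hrec hdom ha (by omega)
  rw [uu]
  omega

lemma uu_geA {t : ℕ} (ht : 1 ≤ t) : A (a+t) ≤ uu A a e t := by
  have h1 : A (a+t) ≤ PS A (a+1) (a+t+1) := single_le_PS (by omega) (by omega)
  rw [uu]
  omega

include hN hpos hrec hdom ha he in
lemma uu_lt_A2 (w : ℕ) : uu A a e w < A (a+w+2) := by
  have h1 : PS A a (a+w+1) = A a + PS A (a+1) (a+w+1) := by
    rw [PS_split (a := a) (b := a+1) (c := a+w+1) (by omega) (by omega), PS_single]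
  have h2 : PS A a (a+w+1) ≤ PS A 1 (a+w+1) := PS_mono_left (by omega)
  have h3 := L1 hN hpos hrec hdom (a+w+1)
  have h4 : A (a+w+1+1) = A (a+w+2) := rfl
  rw [uu]
  omega

include hN hpos hrec hdom ha he in
lemma uuN_split {w s : ℕ} (hs : s + 1 = N) :
    uu A a e (w+s+1) = uu A a e w + A (a+w+s+2) := by
  have hr := rec' hN hpos hrec hdom (b := a+w+s+2) (by omega)
  rw [show a+w+s+2-N = a+w+1 by omega] at hr
  have h1 : PS A (a+1) (a+(w+s+1)+1) = PS A (a+1) (a+w+1) + PS A (a+w+1) (a+(w+s+1)+1) :=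
    PS_split (by omega) (by omega)
  have h2 : PS A (a+w+1) (a+(w+s+1)+1) = PS A (a+w+1) (a+w+s+2) := by
    congr 1
    omega
  rw [uu, uu]
  omega

include hN hpos hrec hdom ha he in
lemma uuN_lt {w s : ℕ} (hs : s + 1 = N) :
    uu A a e (w+s+1) < A (a+w+s+3) := by
  have h0 := uuN_split hN hpos hrec hdom ha he (w := w) hs
  have h1 := uu_lt_A2 hN hpos hrec hdom ha he w
  have hr := rec' hN hpos hrec hdom (b := a+w+s+3) (by omega)
  rw [show a+w+s+3-N = a+w+2 by omega] at hr
  have h2 : PS A (a+w+2) (a+w+s+3) = PS A (a+w+2) (a+w+s+2) + A (a+w+s+2) := by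
    rw [PS_split (a := a+w+2) (b := a+w+s+2) (c := a+w+s+3) (by omega) (by omega), PS_single]
  have h3 : A (a+w+2) ≤ PS A (a+w+2) (a+w+s+2) := single_le_PS le_rfl (by omega)
  omega

include hN hpos hrec hdom ha he in
lemma I1 {p : ℕ} (hp : p + A a = e + A (a+1)) :
    hh A (uu A a e 1) = - hh A e - Th A p (a-1) := by
  obtain ⟨α, rfl⟩ : ∃ α, a = α + 1 := ⟨a-1, by omega⟩
  have hu1 : uu A (α+1) e 1 = e + A (α+1+1) := by
    rw [uu, show α+1+1+1 = (α+1+1)+1 from rfl, PS_single]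
  have hup : e + A (α+1+1) < A (α+1+2) := by
    have h1 := ADD2 hN hpos hrec hdom (a := α+1) (by omega)
    omega
  have hbr : A (α+1+1) = A (α+2) := rfl
  have hRh := Rh hN hpos hrec hdom (m := e) (p := p) (c := α) (b := α+2)
    le_rfl (by omega) (by exact hup)
  have hstab : Th A e (α+1) = hh A e := by
    apply stab hN hpos hrec hdom
    have := A_mono hN hpos hrec hdom (α+1) (α+1+1) (by omega) (by omega)
    omega
  have hb : Th A (e + A (α+2)) (e + A (α+2)) = Th A (e + A (α+2)) (α+2) := by
    apply S4 hN hpos hrec hdom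
    · exact hup
    · have := A_ge_id hN hpos hrec hdom (α+2)
      omega
  have hfix : (α+1) - 1 = α := rfl
  rw [hu1, hh, hfix]
  have e1 : e + A (α+1+1) = e + A (α+2) := rfl
  rw [e1, hb]
  rw [hRh, hstab]

include hN hpos hrec hdom ha he in
lemma IX1 : Th A (uu A a e 1) (a+1) = hh A (uu A a e 1) := by
  apply stab hN hpos hrec hdom
  have := uu_lt hN hpos hrec hdom ha he (t := 1) (by omega)
  omega

include hN hpos hrec hdom ha he in
lemma I2G {s : ℕ} (hsN : s + 3 ≤ N) :
    hh A (uu A a e (s+2)) = - Th A (uu A a e (s+1)) (a+s+1) := by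
  set pp := e + PS A (a+1) (a+s+1) + A (a+s+2) with hpp
  have hs1 : uu A a e (s+2) = uu A a e (s+1) + A (a+s+2) := by
    have := uu_succ (A := A) (a := a) (e := e) (s+1)
    rw [show a+(s+1)+1 = a+s+2 from by omega] at this
    exact this
  have hs2 : uu A a e (s+1) = e + PS A (a+1) (a+s+1) + A (a+s+1) := by
    have := uu_succ (A := A) (a := a) (e := e) s
    rw [show a+s+1 = a+s+1 from rfl] at this
    rw [this, uu]
  have hmp : uu A a e (s+1) + A (a+s+2) = pp + A (a+s+1) := by omega
  have hup : uu A a e (s+2) < A (a+s+3) := by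
    have := uu_lt hN hpos hrec hdom ha he (t := s+2) (by omega)
    rw [show a+(s+2)+1 = a+s+3 from by omega] at this
    omega
  have hRh := Rh hN hpos hrec hdom (m := uu A a e (s+1)) (p := pp) (c := a+s) (b := a+s+2)
    le_rfl hmp (by omega)
  have h0 : Th A pp (a+s) = 0 := by
    apply S3
    have h4 := L1 hN hpos hrec hdom (a+1)
    have h5 : A (a+1+1) ≤ A (a+s+2) := A_mono hN hpos hrec hdom _ _ (by omega) (by omega)
    have h6 : PS A 1 (a+s+1) = PS A 1 (a+1) + PS A (a+1) (a+s+1) :=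
      PS_split (by omega) (by omega)
    omega
  have hb : Th A (uu A a e (s+2)) (uu A a e (s+2)) = Th A (uu A a e (s+2)) (a+s+2) := by
    apply S4 hN hpos hrec hdom
    · exact hup
    · have h7 := uu_geA (A := A) (a := a) (e := e) (t := s+2) (by omega)
      have h8 := A_ge_id hN hpos hrec hdom (a+(s+2))
      rw [show a+(s+2) = a+s+2 from by omega] at h7 h8
      omega
  rw [← hs1] at hRh
  rw [hh, hb, hRh, h0]
  ring

include hN hpos hrec hdom ha he in
lemma I2X {s : ℕ} (hsN : s + 3 ≤ N) :
    Th A (uu A a e (s+2)) (a+s+2) = hh A (uu A a e (s+2)) := by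
  apply stab hN hpos hrec hdom
  have := uu_lt hN hpos hrec hdom ha he (t := s+2) (by omega)
  rw [show a+(s+2)+1 = a+s+2+1 from by omega] at this
  exact this

include hN hpos hrec hdom ha he in
lemma I3G {w s : ℕ} (hs : s + 1 = N) :
    hh A (uu A a e (w+s+1)) = - hh A (uu A a e w) - Th A (uu A a e (w+s)) (a+w+s) := by
  have hsplit := uuN_split hN hpos hrec hdom ha he (w := w) hs
  have hup := uuN_lt hN hpos hrec hdom ha he (w := w) hs
  have hsucc : uu A a e (w+s+1) = uu A a e (w+s) + A (a+w+s+1) := by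
    have := uu_succ (A := A) (a := a) (e := e) (w+s)
    rw [show a+(w+s)+1 = a+w+s+1 from by omega] at this
    exact this
  have hRh := Rh hN hpos hrec hdom (m := uu A a e w) (p := uu A a e (w+s)) (c := a+w+s)
    (b := a+w+s+2) le_rfl (by omega) (by omega)
  have hstab1 : Th A (uu A a e w) (a+w+s+1) = hh A (uu A a e w) := by
    apply stab hN hpos hrec hdom
    have h1 := uu_lt_A2 hN hpos hrec hdom ha he w
    have h2 : A (a+w+2) ≤ A (a+w+s+1+1) := A_mono hN hpos hrec hdom _ _ (by omega) (by omega)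
    omega
  have hb : Th A (uu A a e (w+s+1)) (uu A a e (w+s+1)) =
      Th A (uu A a e (w+s+1)) (a+w+s+2) := by
    apply S4 hN hpos hrec hdom
    · have : A (a+w+s+2+1) = A (a+w+s+3) := rfl
      omega
    · have h8 := A_ge_id hN hpos hrec hdom (a+w+s+2)
      omega
  rw [hh, hb]
  rw [show uu A a e (w+s+1) = uu A a e w + A (a+w+s+2) from hsplit] at *
  rw [hRh, hstab1]

include hN hpos hrec hdom ha he in
lemma I3X {w s : ℕ} (hs : s + 1 = N) :
    Th A (uu A a e (w+s+1)) (a+w+s+1) = - Th A (uu A a e (w+s)) (a+w+s) := by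
  have hsplit := uuN_split hN hpos hrec hdom ha he (w := w) hs
  have hsucc : uu A a e (w+s+1) = uu A a e (w+s) + A (a+w+s+1) := by
    have := uu_succ (A := A) (a := a) (e := e) (w+s)
    rw [show a+(w+s)+1 = a+w+s+1 from by omega] at this
    exact this
  have hRg := Rg hN hpos hrec hdom (x := uu A a e (w+s)) (b := a+w+s)
    (by
      have h1 : A (a+w+s+2) ≤ uu A a e (w+s+1) := by omega
      omega)
  rw [← hsucc] at hRg
  exact hRg

include hN hpos hrec hdom ha he in
lemma XSTEP {s : ℕ} (hs : 1 ≤ s) :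
    Th A (uu A a e (s+1)) (a+s+1) = - Th A (uu A a e s) (a+s) := by
  rcases le_or_gt (s+2) N with hcase | hcase
  · obtain ⟨σ, rfl⟩ : ∃ σ, s = σ + 1 := ⟨s-1, by omega⟩
    have h1 := I2G hN hpos hrec hdom ha he (s := σ) (by omega)
    have h2 := I2X hN hpos hrec hdom ha he (s := σ) (by omega)
    rw [show σ+1+1 = σ+2 from rfl, show a+(σ+1)+1 = a+σ+2 from by omega,
      show a+(σ+1) = a+σ+1 from by omega]
    rw [h2, h1]
  · obtain ⟨s0, hs0⟩ : ∃ s0, s0 + 1 = N := ⟨N-1, by omega⟩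
    obtain ⟨w, rfl⟩ : ∃ w, s = w + s0 := ⟨s - s0, by omega⟩
    have := I3X hN hpos hrec hdom ha he (w := w) (s := s0) hs0
    rw [show a+(w+s0)+1 = a+w+s0+1 from by omega, show a+(w+s0) = a+w+s0 from by omega]
    exact this

include hN hpos hrec hdom ha he in
lemma DX : ∀ s, 1 ≤ s →
    Th A (uu A a e s) (a+s) = (-1:ℤ)^(s-1) * hh A (uu A a e 1) := by
  intro s hs
  induction s, hs using Nat.le_induction with
  | base =>
    simpa using IX1 hN hpos hrec hdom ha he
  | succ s hs ih =>
    have h1 := XSTEP hN hpos hrec hdom ha he (s := s) hs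
    rw [show a+(s+1) = a+s+1 from by omega, h1, ih]
    obtain ⟨σ, rfl⟩ : ∃ σ, s = σ + 1 := ⟨s-1, by omega⟩
    rw [show σ+1+1-1 = σ+1 from rfl, show σ+1-1 = σ from rfl, pow_succ]
    ring

include hN hpos hrec hdom ha he in
lemma GFORM {t : ℕ} (ht1 : 1 ≤ t) (htN : t + 1 ≤ N) :
    hh A (uu A a e t) = (-1:ℤ)^(t-1) * hh A (uu A a e 1) := by
  rcases Nat.lt_or_ge t 2 with h2 | h2
  · have : t = 1 := by omega
    subst this
    simp
  · obtain ⟨s, rfl⟩ : ∃ s, t = s + 2 := ⟨t-2, by omega⟩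
    have h1 := I2G hN hpos hrec hdom ha he (s := s) (by omega)
    have h3 := DX hN hpos hrec hdom ha he (s+1) (by omega)
    rw [show a+(s+1) = a+s+1 from by omega] at h3
    rw [h1, h3, show s+1-1 = s from rfl, show s+2-1 = s+1 from rfl, pow_succ]
    ring

include hN hpos hrec hdom ha he in
lemma GN1 (hNe : Even N) : hh A (uu A a e (N-1)) = hh A (uu A a e 1) := by
  have h1 := GFORM hN hpos hrec hdom ha he (t := N-1) (by omega) (by omega)
  have h2 : Even (N-1-1) := by
    obtain ⟨ν, hν⟩ : ∃ ν, N = ν + 2 := ⟨N-2, by omega⟩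
    rcases hNe with ⟨m, hm⟩
    exact ⟨m-1, by omega⟩
  rw [h1, Even.neg_one_pow h2, one_mul]

end Family
section Core

open Finset

variable {N : ℕ} (hN : 2 ≤ N) (hNe : Even N)
  (hpos : ∀ i, 1 ≤ i → 0 < A i)
  (hrec : ∀ k, 1 ≤ k → A (k + N) = PS A k (k + N))
  (hdom : ∀ k, 1 ≤ k → k ≤ N → PS A 1 k < A k)

lemma tri {u v : ℤ} (hu : B u) (hv : B v) (huv : u * v ≤ 0) : B (-u - v) := by
  rcases hu with h|h|h <;> rcases hv with h'|h'|h' <;> subst h <;> subst h' <;>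
    first
      | (exfalso; omega)
      | (unfold B; omega)

lemma Bneg {z : ℤ} (h : B z) : B (-z) := by
  unfold B at *; omega

lemma negpow (t : ℕ) : (-1:ℤ)^t = 1 ∨ (-1:ℤ)^t = -1 := neg_one_pow_eq_or ℤ t

include hN hNe hpos hrec hdom

/-- the C-family correlation lemma. -/
lemma CJ {Y : ℕ} (HB : ∀ y, y < Y → ∀ b, B (Th A y b)) {a e : ℕ} (ha : 1 ≤ a) (he : e < A a)
    (t : ℕ) (h1 : uu A a e t < Y) (h2 : uu A a e (N-1) < Y) :
    (-1:ℤ)^t * hh A (uu A a e t) * hh A (uu A a e (N-1)) ≤ 0 := by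
  have hGN1 : hh A (uu A a e (N-1)) = hh A (uu A a e 1) := GN1 hN hpos hrec hdom ha he hNe
  have hu1Y : uu A a e 1 < Y := by
    have := uu_mono (A := A) (a := a) (e := e) (show 1 ≤ N-1 by omega)
    omega
  have hBG1 : B (hh A (uu A a e 1)) := HB _ hu1Y _
  rcases Nat.eq_zero_or_pos t with rfl | ht1
  · -- t = 0
    set p := e + A (a+1) - A a with hp
    have hmono : A a ≤ A (a+1) := A_mono hN hpos hrec hdom _ _ ha (by omega)
    have hpeq : p + A a = e + A (a+1) := by omega
    have hI1 := I1 hN hpos hrec hdom ha he hpeq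
    have hu1 : uu A a e 1 = e + A (a+1) := by
      rw [uu, show a+1+1 = (a+1)+1 from rfl, PS_single]
    have hpY : p < Y := by
      have := hpos a ha
      omega
    have heY : e < Y := by
      have := uu_strict (A := A) hpos (a := a) (e := e) (show 0 < 1 by omega)
      have := uu_zero (A := A) (a := a) (e := e)
      omega
    have hBe : B (hh A e) := HB _ heY _
    have hBp : B (Th A p (a-1)) := HB _ hpY _
    rw [pow_zero, one_mul, uu_zero, hGN1, hI1]
    rcases hBe with h|h|h <;> rcases hBp with h'|h'|h' <;> rw [h, h'] <;> norm_num
  rcases le_or_gt (t+1) N with htN | htN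
  · -- 1 ≤ t ≤ N-1
    have hG := GFORM hN hpos hrec hdom ha he ht1 htN
    rw [hG, hGN1]
    obtain ⟨σ, rfl⟩ : ∃ σ, t = σ + 1 := ⟨t-1, by omega⟩
    have hpow : (-1:ℤ)^(σ+1) * (-1:ℤ)^(σ+1-1) = -1 := by
      rw [show σ+1-1 = σ from rfl, ← pow_add]
      exact Odd.neg_one_pow ⟨σ, by omega⟩
    calc (-1:ℤ)^(σ+1) * ((-1:ℤ)^(σ+1-1) * hh A (uu A a e 1)) * hh A (uu A a e 1)
        = ((-1:ℤ)^(σ+1) * (-1:ℤ)^(σ+1-1)) * (hh A (uu A a e 1) * hh A (uu A a e 1)) := by ring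
      _ = -(hh A (uu A a e 1) * hh A (uu A a e 1)) := by rw [hpow]; ring
      _ ≤ 0 := neg_nonpos.2 (mul_self_nonneg _)
  · -- t ≥ N
    obtain ⟨s0, hs0⟩ : ∃ s0, s0 + 1 = N := ⟨N-1, by omega⟩
    obtain ⟨w, rfl⟩ : ∃ w, t = w + s0 + 1 := ⟨t - N, by omega⟩
    have hI3 := I3G hN hpos hrec hdom ha he (w := w) (s := s0) hs0
    have hDX := DX hN hpos hrec hdom ha he (w + s0) (by omega)
    rw [show a+(w+s0) = a+w+s0 from by omega] at hDX
    have hwY : uu A a e w < Y := by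
      have := uu_strict (A := A) hpos (a := a) (e := e) (show w < w+s0+1 by omega)
      omega
    have hBw : B (hh A (uu A a e w)) := HB _ hwY _
    have hpow1 : (-1:ℤ)^(w+s0+1) = (-1:ℤ)^w := by
      rw [pow_add, pow_add]
      have : (-1:ℤ)^s0 * (-1:ℤ)^1 = 1 := by
        rw [← pow_add]
        exact Even.neg_one_pow (hs0 ▸ hNe)
      rw [mul_assoc, this, mul_one]
    have hpow2 : (-1:ℤ)^(w+s0-1) = (-1:ℤ)^w := by
      obtain ⟨σ, hσ⟩ : ∃ σ, s0 = σ + 1 := ⟨s0-1, by omega⟩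
      have hev : Even σ := by
        rcases hNe with ⟨m, hm⟩
        exact ⟨m-1, by omega⟩
      rw [show w+s0-1 = w+σ from by omega, pow_add, Even.neg_one_pow hev, mul_one]
    rw [hI3, hDX, hGN1, hpow1, hpow2]
    rcases hBw with h|h|h <;> rcases hBG1 with h'|h'|h' <;>
      rcases negpow w with hw|hw <;> rw [h, h', hw] <;> norm_num

/-- the Q-family: `X̂` values. -/
lemma XHAT : ∀ s, N - 1 ≤ s → Th A (PS A 1 (s+1)) s = (-1:ℤ)^s := by
  intro s hs
  induction s, hs using Nat.le_induction with
  | base =>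
    have h1 : Th A (PS A 1 (N-1+1)) (N-1) = hh A (PS A 1 (N-1+1)) := by
      apply stab hN hpos hrec hdom
      have h2 := hdom N (by omega) le_rfl
      rw [show N-1+1 = N from by omega]
      have h3 : A N ≤ A (N-1+1) := by rw [show N-1+1 = N from by omega]
      omega
    have h4 := UC hN hpos hrec hdom (c := N-1) (by omega)
    rw [h1, h4]
  | succ s hs ih =>
    have hsplit : PS A 1 (s+2) = PS A 1 (s+1) + A (s+1) := by
      rw [PS_split (a := 1) (b := s+1) (c := s+2) (by omega) (by omega), PS_single]
    have hge : A (s+2) ≤ PS A 1 (s+2) := by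
      have hr := rec' hN hpos hrec hdom (b := s+2) (by omega)
      have := PS_mono_left (A := A) (a := s+2-N) (a' := 1) (b := s+2) (by omega)
      omega
    have hRg := Rg hN hpos hrec hdom (x := PS A 1 (s+1)) (b := s)
      (by omega)
    rw [← hsplit] at hRg
    rw [hRg, ih, pow_succ]
    ring

/-- the bottom lemma. -/
lemma BOT0 {Y : ℕ} (HB : ∀ y, y < Y → ∀ b, B (Th A y b))
    (c : ℕ) (hY : PS A 1 (c+1) < Y) :
    0 ≤ (-1:ℤ)^c * hh A (PS A 1 (c+1)) := by
  rcases le_or_gt (c+1) N with hc | hc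
  · rw [UC hN hpos hrec hdom hc, ← pow_add]
    have : Even (c+c) := ⟨c, by omega⟩
    rw [Even.neg_one_pow this]
    omega
  · -- c ≥ N
    obtain ⟨s0, hs0⟩ : ∃ s0, s0 + 1 = N := ⟨N-1, by omega⟩
    obtain ⟨w, rfl⟩ : ∃ w, c = w + s0 + 1 := ⟨c - N, by omega⟩
    set c := w + s0 + 1 with hc'
    have hQsplit : PS A 1 (c+1) = PS A 1 (w+1) + A (c+1) := by
      have hr := rec' hN hpos hrec hdom (b := c+1) (by omega)
      rw [show c+1-N = w+1 from by omega] at hr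
      have h1 : PS A 1 (c+1) = PS A 1 (w+1) + PS A (w+1) (c+1) :=
        PS_split (by omega) (by omega)
      omega
    have hQw_lt : PS A 1 (w+1) < A (w+2) := by
      have := L1 hN hpos hrec hdom (w+1)
      have h2 : A (w+1+1) = A (w+2) := rfl
      omega
    have hQc_lt : PS A 1 (c+1) < A (c+2) := by
      have hr := rec' hN hpos hrec hdom (b := c+2) (by omega)
      rw [show c+2-N = w+2 from by omega] at hr
      have h1 : PS A (w+2) (c+2) = PS A (w+2) (c+1) + A (c+1) := by
        rw [PS_split (a := w+2) (b := c+1) (c := c+2) (by omega) (by omega), PS_single]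
      have h2 : A (w+2) ≤ PS A (w+2) (c+1) := single_le_PS le_rfl (by omega)
      omega
    have hQstep : PS A 1 (c+1) = PS A 1 c + A c := by
      rw [PS_split (a := 1) (b := c) (c := c+1) (by omega) (by omega), PS_single]
    have hRh := Rh hN hpos hrec hdom (m := PS A 1 (w+1)) (p := PS A 1 c) (c := c-1)
      (b := c+1) (by omega)
      (by rw [show c-1+2 = c+1 from by omega, show c-1+1 = c from by omega]; omega)
      (by rw [show c-1+2 = c+1 from by omega, show c-1+3 = c+2 from by omega]; omega)
    rw [show c-1+2 = c+1 from by omega, show c-1+1 = c from by omega] at hRh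
    rw [← hQsplit] at hRh
    have hstabw : Th A (PS A 1 (w+1)) c = hh A (PS A 1 (w+1)) := by
      apply stab hN hpos hrec hdom
      have : A (w+2) ≤ A (c+1) := A_mono hN hpos hrec hdom _ _ (by omega) (by omega)
      omega
    have hxhat : Th A (PS A 1 c) (c-1) = (-1:ℤ)^(c-1) := by
      have := XHAT hN hNe hpos hrec hdom (c-1) (by omega)
      rw [show c-1+1 = c from by omega] at this
      exact this
    have hle : c + 1 ≤ PS A 1 (c+1) := by
      have h1 := A_ge_id hN hpos hrec hdom (c+1)
      omega
    have hhh : hh A (PS A 1 (c+1)) = Th A (PS A 1 (c+1)) (c+1) :=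
      S4 hN hpos hrec hdom hQc_lt hle
    have hBw : B (hh A (PS A 1 (w+1))) := by
      apply HB
      have h3 := hpos (c+1) (by omega)
      omega
    have hpowc : (-1:ℤ)^c * (-1:ℤ)^(c-1) = -1 := by
      rw [← pow_add]
      apply Odd.neg_one_pow
      exact ⟨c-1, by omega⟩
    rw [hhh, hRh, hstabw, hxhat]
    have expand : (-1:ℤ)^c * (-(hh A (PS A 1 (w+1))) - (-1:ℤ)^(c-1))
        = -((-1:ℤ)^c * hh A (PS A 1 (w+1))) - ((-1:ℤ)^c * (-1:ℤ)^(c-1)) := by ring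
    rw [expand, hpowc]
    rcases hBw with h|h|h <;> rcases negpow c with hw|hw <;> rw [h, hw] <;> norm_num

end Core
section GHJsec

open Finset

variable {N : ℕ} (hN : 2 ≤ N) (hNe : Even N)
  (hpos : ∀ i, 1 ≤ i → 0 < A i)
  (hrec : ∀ k, 1 ≤ k → A (k + N) = PS A k (k + N))
  (hdom : ∀ k, 1 ≤ k → k ≤ N → PS A 1 k < A k)

include hN hNe hpos hrec hdom in
/-- the GH-family correlation lemma. -/
lemma GHJ {Y : ℕ} (HB : ∀ y, y < Y → ∀ b, B (Th A y b)) :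
    ∀ t j r, N + 1 ≤ j → A j + t < Y → PS A (j-N) (j-N+r+1) + t < Y →
    (-1:ℤ)^r * Th A (A j + t) (j-1) * hh A (PS A (j-N) (j-N+r+1) + t) ≤ 0 := by
  intro t
  induction t using Nat.strong_induction_on with
  | _ t IHt =>
  intro j r hj hY1 hY2
  rcases le_or_gt (A (j+1)) (A j + t) with hbig | hsmall
  · have h0 : Th A (A j + t) (j-1) = 0 := by
      apply VB hN hpos hrec hdom
      rw [show j-1+2 = j+1 from by omega]
      exact hbig
    rw [h0, mul_zero, zero_mul]
  -- the g-step
  have hAj : A j = PS A (j-N) (j-1) + A (j-1) := by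
    have hr := rec' hN hpos hrec hdom (b := j) (by omega)
    have h1 : PS A (j-N) j = PS A (j-N) (j-1) + PS A (j-1) j :=
      PS_split (by omega) (by omega)
    have h2 : PS A (j-1) j = A (j-1) := by
      have h3 := PS_single (A := A) (j-1)
      rw [show j-1+1 = j from by omega] at h3
      exact h3
    omega
  set x0 := t + PS A (j-N) (j-1) with hx0
  have hgx : x0 + A (j-1) = A j + t := by omega
  have hg : Th A (A j + t) (j-1) = - Th A x0 (j-2) := by
    have hRg := Rg hN hpos hrec hdom (x := x0) (b := j-2) (by
      rw [show j-2+2 = j from by omega, show j-2+1 = j-1 from by omega]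
      omega)
    rw [show j-2+1 = j-1 from by omega] at hRg
    rw [← hgx]
    exact hRg
  have hx0Y : x0 < Y := by
    have := hpos (j-1) (by omega)
    omega
  rw [hg]
  rcases le_or_gt (N+2) j with hj2 | hj2
  · -- generic j ≥ N+2
    have ha : 1 ≤ j-1-N := by omega
    have hAj1 : A (j-1) = A (j-1-N) + PS A (j-N) (j-1) := by
      have hr := rec' hN hpos hrec hdom (b := j-1) (by omega)
      have h1 : PS A (j-1-N) (j-1) = PS A (j-1-N) (j-N) + PS A (j-N) (j-1) :=
        PS_split (by omega) (by omega)
      have h2 : PS A (j-1-N) (j-N) = A (j-1-N) := by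
        have h3 := PS_single (A := A) (j-1-N)
        rw [show j-1-N+1 = j-N from by omega] at h3
        exact h3
      rw [show j-1-N = j-1-N from rfl] at hr
      omega
    rcases lt_or_ge t (A (j-1-N)) with hA | hB
    · -- case A : reduce to CJ
      have hu1 : uu A (j-1-N) t (N-1) = x0 := by
        rw [uu, show j-1-N+1 = j-N from by omega, show j-1-N+(N-1)+1 = j-1 from by omega]
      have hu2 : uu A (j-1-N) t (r+1) = PS A (j-N) (j-N+r+1) + t := by
        rw [uu, show j-1-N+1 = j-N from by omega, show j-1-N+(r+1)+1 = j-N+r+1 from by omega]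
        omega
      have hstab : Th A x0 (j-2) = hh A x0 := by
        apply stab hN hpos hrec hdom
        rw [show j-2+1 = j-1 from by omega]
        omega
      have hCJ := CJ hN hNe hpos hrec hdom HB (a := j-1-N) (e := t) ha hA (r+1)
        (by rw [hu2]; exact hY2) (by rw [hu1]; exact hx0Y)
      rw [hstab, ← hu1, ← hu2]
      have hre : (-1:ℤ)^r * -(hh A (uu A (j-1-N) t (N-1))) * hh A (uu A (j-1-N) t (r+1))
          = (-1:ℤ)^(r+1) * hh A (uu A (j-1-N) t (r+1)) * hh A (uu A (j-1-N) t (N-1)) := by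
        rw [pow_succ]; ring
      rw [hre]
      exact hCJ
    · -- case B : recurse
      obtain ⟨t1, rfl⟩ : ∃ t1, t = t1 + A (j-1-N) := ⟨t - A (j-1-N), by omega⟩
      have hx0' : x0 = A (j-1) + t1 := by omega
      have h2 : PS A (j-1-N) (j-N) = A (j-1-N) := by
        have h3 := PS_single (A := A) (j-1-N)
        rw [show j-1-N+1 = j-N from by omega] at h3
        exact h3
      have harg : PS A ((j-1)-N) ((j-1)-N+(r+1)+1) + t1
          = PS A (j-N) (j-N+r+1) + (t1 + A (j-1-N)) := by
        have h1 : PS A (j-1-N) (j-N+r+1) = PS A (j-1-N) (j-N) + PS A (j-N) (j-N+r+1) :=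
          PS_split (by omega) (by omega)
        rw [show (j-1)-N+(r+1)+1 = j-N+r+1 from by omega, show (j-1)-N = j-1-N from rfl]
        omega
      have hIH := IHt t1 (by have := hpos (j-1-N) (by omega); omega) (j-1) (r+1)
        (by omega) (by omega) (by rw [harg]; exact hY2)
      rw [show (j-1)-1 = j-2 from by omega, harg] at hIH
      rw [hx0']
      have hre : (-1:ℤ)^r * -(Th A (A (j-1) + t1) (j-2))
            * hh A (PS A (j-N) (j-N+r+1) + (t1 + A (j-1-N)))
          = (-1:ℤ)^(r+1) * Th A (A (j-1) + t1) (j-2)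
            * hh A (PS A (j-N) (j-N+r+1) + (t1 + A (j-1-N))) := by
        rw [pow_succ]; ring
      rw [hre]
      exact hIH
  · -- bottom level j = N+1
    have hj3 : j = N+1 := by omega
    subst hj3
    have hx0N : x0 = t + PS A 1 N := by
      rw [hx0, show N+1-N = 1 from by omega, show N+1-1 = N from by omega]
    rcases Nat.eq_zero_or_pos t with rfl | ht
    · -- t = 0 : bottom lemma
      have hst : Th A x0 (N+1-2) = hh A x0 := by
        apply stab hN hpos hrec hdom
        have h4 := hdom N (by omega) le_rfl
        rw [show N+1-2+1 = N from by omega]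
        omega
      have hU := UC hN hpos hrec hdom (c := N-1) (by omega)
      rw [show N-1+1 = N from by omega] at hU
      have hodd : Odd (N-1) := Nat.Even.sub_odd (by omega) hNe odd_one
      have hUC : Th A x0 (N+1-2) = -1 := by
        rw [hst, hx0N, zero_add, hU]
        exact Odd.neg_one_pow hodd
      have hargeq : PS A (N+1-N) (N+1-N+r+1) + 0 = PS A 1 (r+2) := by
        rw [add_zero, show N+1-N = 1 from by omega, show (1:ℕ)+r+1 = r+2 from by omega]
      have hBOT := BOT0 hN hNe hpos hrec hdom HB (r+1) (by rw [← hargeq]; exact hY2)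
      rw [hUC, hargeq]
      have hre : (-1:ℤ)^r * -(-1:ℤ) * hh A (PS A 1 (r+2))
          = (-1:ℤ)^(r+1) * hh A (PS A 1 (r+2)) * (-1) := by
        rw [pow_succ]; ring
      rw [hre]
      nlinarith [hBOT]
    · -- t ≥ 1 : vanishing
      have h0 : Th A x0 (N+1-2) = 0 := by
        apply S3
        rw [show N+1-2+1 = N from by omega]
        omega
      rw [h0]
      simp
end GHJsec
section Main

open Finset

variable {N : ℕ} (hN : 2 ≤ N) (hNe : Even N)
  (hpos : ∀ i, 1 ≤ i → 0 < A i)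
  (hrec : ∀ k, 1 ≤ k → A (k + N) = PS A k (k + N))
  (hdom : ∀ k, 1 ≤ k → k ≤ N → PS A 1 k < A k)

include hN hNe hpos hrec hdom in
/-- the main boundedness theorem : all truncated signed counts are in {-1,0,1}. -/
lemma Bmain : ∀ x b, B (Th A x b) := by
  intro x
  induction x using Nat.strong_induction_on with
  | _ x IH =>
  intro b
  rcases Nat.eq_zero_or_pos x with rfl | hx
  · rw [S1 hpos]; right; right; rfl
  rcases lt_or_ge x (A 1) with hx1 | hx1
  · rw [S7 hN hpos hrec hdom hx hx1]; right; left; rfl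
  classical
  set κ := Nat.findGreatest (fun j => A j ≤ x) x with hκ
  have hA1 : 1 ≤ x := hx
  have h1x : (1:ℕ) ≤ x := by
    have := hpos 1 le_rfl
    omega
  have hk1 : 1 ≤ κ := Nat.le_findGreatest h1x hx1
  have hk2 : A κ ≤ x := Nat.findGreatest_spec (P := fun j => A j ≤ x) h1x hx1
  have hk3 : x < A (κ+1) := by
    by_contra hcon
    push_neg at hcon
    have h1 : κ + 1 ≤ x := le_trans (A_ge_id hN hpos hrec hdom (κ+1)) hcon
    exact Nat.findGreatest_is_greatest (P := fun j => A j ≤ x) (n := x) (k := κ+1)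
      (by omega) h1 hcon
  rcases le_or_gt (b+2) κ with hb | hb
  · have h0 : Th A x b = 0 :=
      VB hN hpos hrec hdom (le_trans (A_mono hN hpos hrec hdom _ _ (by omega) hb) hk2)
    rw [h0]; right; left; rfl
  rcases eq_or_lt_of_le (show κ ≤ b + 1 by omega) with hbk | hbk
  · -- b = κ - 1 : the "g" value
    rcases Nat.eq_zero_or_pos b with rfl | hbpos
    · have h0 : Th A x 0 = 0 := by
        apply S3
        have h2 : PS A 1 (0+1) = 0 := PS_empty le_rfl
        omega
      rw [h0]; right; left; rfl
    · obtain ⟨c, rfl⟩ : ∃ c, b = c+1 := ⟨b-1, by omega⟩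
      have hκc : κ = c+2 := by omega
      obtain ⟨x0, hx0⟩ : ∃ x0, x = x0 + A (c+1) := by
        refine ⟨x - A (c+1), ?_⟩
        have h2 : A (c+1) ≤ A κ := A_mono hN hpos hrec hdom _ _ (by omega) (by omega)
        omega
      have hRg := Rg hN hpos hrec hdom (x := x0) (b := c) (by rw [← hx0, ← hκc]; exact hk2)
      rw [hx0, hRg]
      apply Bneg
      apply IH
      have := hpos (c+1) (by omega)
      omega
  · -- κ ≤ b : the "h" value
    have hκb : κ ≤ b := by omega
    rcases eq_or_lt_of_le hk1 with hκ1 | hκ2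
    · -- κ = 1
      obtain ⟨m, hm⟩ : ∃ m, x = m + A 1 := ⟨x - A 1, by omega⟩
      have hup : m + A 1 < A 2 := by
        rw [← hm]
        rw [← hκ1] at hk3
        exact hk3
      have hR := Rh1 hN hpos hrec hdom hup (show 1 ≤ b by omega)
      rw [hm, hR]
      apply Bneg
      apply IH
      have := hpos 1 le_rfl
      omega
    · -- κ ≥ 2
      obtain ⟨c, hκc⟩ : ∃ c, κ = c+2 := ⟨κ-2, by omega⟩
      have hAc2x : A (c+2) ≤ x := by rw [← hκc]; exact hk2
      have hxup : x < A (c+3) := by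
        rw [show c+3 = (c+2)+1 from rfl, ← hκc]
        exact hk3
      obtain ⟨m, hm⟩ : ∃ m, x = m + A (c+2) := ⟨x - A (c+2), by omega⟩
      obtain ⟨p, hp⟩ : ∃ p, x = p + A (c+1) := by
        refine ⟨x - A (c+1), ?_⟩
        have h2 : A (c+1) ≤ A (c+2) := A_mono hN hpos hrec hdom _ _ (by omega) (by omega)
        omega
      have hmY : m < x := by
        have := hpos (c+2) (by omega)
        omega
      have hpY : p < x := by
        have := hpos (c+1) (by omega)
        omega
      have hRh := Rh hN hpos hrec hdom (m := m) (p := p) (c := c) (b := b)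
        (by omega) (by omega) (by rw [← hm]; exact hxup)
      have hprod : Th A m (c+1) * Th A p c ≤ 0 := by
        rcases le_or_gt (c+2) N with hsm | hsm
        · -- κ ≤ N : dominance kills the g factor
          have h0 : Th A p c = 0 := by
            apply S3
            have h1 := hdom (c+2) (by omega) hsm
            have h2 : PS A 1 (c+2) = PS A 1 (c+1) + A (c+1) := by
              rw [PS_split (a := 1) (b := c+1) (c := c+2) (by omega) (by omega), PS_single]
            omega
          rw [h0, mul_zero]
        rcases eq_or_lt_of_le (show N+1 ≤ c+2 by omega) with hNk | hNk
        · -- κ = N + 1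
          have hcN : c+1 = N := by omega
          have hA1N : A (c+2) = PS A 1 (c+1) + A (c+1) := by
            have hr := hrec 1 le_rfl
            rw [show 1+N = c+2 from by omega] at hr
            have h2 : PS A 1 (c+2) = PS A 1 (c+1) + A (c+1) := by
              rw [PS_split (a := 1) (b := c+1) (c := c+2) (by omega) (by omega), PS_single]
            omega
          have hpm : p = m + PS A 1 (c+1) := by omega
          rcases Nat.eq_zero_or_pos m with rfl | hm1
          · have hT1 : Th A 0 (c+1) = 1 := S1 hpos (c+1)
            have hT2 : Th A p c = -1 := by
              have hst : Th A p c = hh A p := by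
                apply stab hN hpos hrec hdom
                have h4 := hdom N (by omega) le_rfl
                rw [show c+1 = N from hcN] at hpm ⊢
                omega
              have hU := UC hN hpos hrec hdom (c := c) (by omega)
              have hodd : Odd c := by
                have : c = N - 1 := by omega
                rw [this]
                exact Nat.Even.sub_odd (by omega) hNe odd_one
              rw [hst, hpm, zero_add, hU]
              exact Odd.neg_one_pow hodd
            rw [hT1, hT2]
            omega
          · have h0 : Th A p c = 0 := by
              apply S3
              omega
            rw [h0, mul_zero]
        · -- κ ≥ N + 2 : the generic cases
          set a := c+1-N with ha'
          have ha : 1 ≤ a := by omega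
          have hAc1 : A (c+1) = A a + PS A (c+2-N) (c+1) := by
            have hr := rec' hN hpos hrec hdom (b := c+1) (by omega)
            have h1 : PS A (c+1-N) (c+1) = PS A (c+1-N) (c+2-N) + PS A (c+2-N) (c+1) :=
              PS_split (by omega) (by omega)
            have h2 : PS A (c+1-N) (c+2-N) = A a := by
              have h3 := PS_single (A := A) a
              rw [show a+1 = c+2-N from by omega] at h3
              rw [← h3]
            omega
          have hAc2 : A (c+2) = PS A (c+2-N) (c+1) + A (c+1) := by
            have hr := rec' hN hpos hrec hdom (b := c+2) (by omega)
            have h1 : PS A (c+2-N) (c+2) = PS A (c+2-N) (c+1) + PS A (c+1) (c+2) :=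
              PS_split (by omega) (by omega)
            have h2 : PS A (c+1) (c+2) = A (c+1) := PS_single (c+1)
            omega
          have hpm : p = m + PS A (c+2-N) (c+1) := by omega
          have HB : ∀ y, y < x → ∀ b', B (Th A y b') := fun y hy b' => IH y hy b'
          rcases lt_or_ge m (A a) with hcA | hcB
          · -- case A : CJ
            have hu0 : uu A a m 0 = m := uu_zero
            have huN : uu A a m (N-1) = p := by
              rw [uu, show a+1 = c+2-N from by omega, show a+(N-1)+1 = c+1 from by omega]
              omega
            have hst1 : Th A m (c+1) = hh A m := by
              apply stab hN hpos hrec hdom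
              have h2 : A a ≤ A (c+1+1) := A_mono hN hpos hrec hdom _ _ (by omega) (by omega)
              omega
            have hst2 : Th A p c = hh A p := by
              apply stab hN hpos hrec hdom
              have h2 : A (c+1) = A (c+1) := rfl
              omega
            have hCJ := CJ hN hNe hpos hrec hdom HB (a := a) (e := m) ha hcA 0
              (by rw [hu0]; exact hmY) (by rw [huN]; exact hpY)
            rw [hu0, huN, pow_zero, one_mul] at hCJ
            rw [hst1, hst2]
            exact hCJ
          · -- case B : GHJ
            obtain ⟨t, rfl⟩ : ∃ t, m = A a + t := ⟨m - A a, by omega⟩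
            have hpt : p = A (c+1) + t := by omega
            have harg : PS A ((c+1)-N) ((c+1)-N+0+1) + t = A a + t := by
              have h3 := PS_single (A := A) a
              rw [show (c+1)-N+0+1 = a+1 from by omega, show (c+1)-N = a from rfl, h3]
            have hGHJ := GHJ hN hNe hpos hrec hdom HB t (c+1) 0 (by omega)
              (by rw [← hpt]; exact hpY) (by rw [harg]; exact hmY)
            rw [show (c+1)-1 = c from rfl, harg, ← hpt, pow_zero, one_mul] at hGHJ
            have hst1 : Th A (A a + t) (c+1) = hh A (A a + t) := by
              apply stab hN hpos hrec hdom
              have h2 : PS A (c+3-N) (c+2) ≤ A (c+2) :=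
                sum_le_A hN hpos hrec hdom (by omega) (by omega)
              have h3 : A (c+3) = PS A (c+3-N) (c+2) + A (c+2) := by
                have hr := rec' hN hpos hrec hdom (b := c+3) (by omega)
                have h4 : PS A (c+3-N) (c+3) = PS A (c+3-N) (c+2) + PS A (c+2) (c+3) :=
                  PS_split (by omega) (by omega)
                have h5 : PS A (c+2) (c+3) = A (c+2) := PS_single (c+2)
                omega
              have h6 : A (c+1+1) = A (c+2) := rfl
              omega
            rw [hst1]
            nlinarith [hGHJ]
      rw [hm, hRh]
      exact tri (IH m (by omega) (c+1)) (IH p (by omega) c) hprod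

end Main
section Assemble

open Finset

variable {N : ℕ} (hN : 2 ≤ N) (hNe : Even N)
  (hpos : ∀ i, 1 ≤ i → 0 < A i)
  (hrec : ∀ k, 1 ≤ k → A (k + N) = PS A k (k + N))
  (hdom : ∀ k, 1 ≤ k → k ≤ N → PS A 1 k < A k)

lemma sgnSum_coe {s : Finset (Finset ℕ)} {S : Set (Finset ℕ)} (h : S = ↑s) :
    sgnSum S = ∑ F ∈ s, (-1:ℤ)^F.card := by
  rw [sgnSum, h, finsum_mem_coe_finset]

include hN hpos hrec hdom in
lemma srep_coe (x : ℕ) : SRep A x = ↑(Reps A x x) := by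
  ext F
  simp only [SRep, Set.mem_setOf_eq, Finset.mem_coe, mem_Reps]
  constructor
  · rintro ⟨hp, hs⟩
    refine ⟨fun i hi => ?_, hs⟩
    have h2 : A i ≤ ∑ j ∈ F, A j :=
      Finset.single_le_sum (fun j _ => Nat.zero_le (A j)) hi
    have h3 := A_ge_id hN hpos hrec hdom i
    exact Finset.mem_Icc.2 ⟨hp i hi, by omega⟩
  · rintro ⟨hsub, hs⟩
    exact ⟨fun i hi => (Finset.mem_Icc.1 (hsub hi)).1, hs⟩

include hN hpos hrec hdom in
lemma len_set_eq (x k : ℕ) :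
    {F | F ∈ SRep A x ∧ len F = k} = ↑((Reps A x k).filter (fun F => F.sup id = k)) := by
  ext F
  simp only [SRep, len, Set.mem_setOf_eq, Finset.mem_coe, Finset.mem_filter, mem_Reps]
  constructor
  · rintro ⟨⟨hp, hs⟩, hsup⟩
    refine ⟨⟨fun i hi => ?_, hs⟩, hsup⟩
    have h2 : i ≤ F.sup id := Finset.le_sup (f := id) hi
    exact Finset.mem_Icc.2 ⟨hp i hi, by omega⟩
  · rintro ⟨⟨hsub, hs⟩, hsup⟩
    exact ⟨⟨fun i hi => (Finset.mem_Icc.1 (hsub hi)).1, hs⟩, hsup⟩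

lemma lam_eq (x k : ℕ) (hk : 1 ≤ k) :
    (∑ F ∈ (Reps A x k).filter (fun F => F.sup id = k), (-1:ℤ)^F.card)
      = Th A x k - Th A x (k-1) := by
  classical
  have hsplit := Finset.sum_filter_add_sum_filter_not (Reps A x k)
    (fun F => F.sup id = k) (fun F => (-1:ℤ)^F.card)
  have h1 : (Reps A x k).filter (fun F => ¬ F.sup id = k) = Reps A x (k-1) := by
    ext F
    simp only [Finset.mem_filter, mem_Reps]
    constructor
    · rintro ⟨⟨hsub, hs⟩, hns⟩
      refine ⟨fun i hi => ?_, hs⟩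
      have h2 := Finset.mem_Icc.1 (hsub hi)
      have h3 : i ≠ k := by
        rintro rfl
        apply hns
        apply le_antisymm
        · exact Finset.sup_le fun j hj => (Finset.mem_Icc.1 (hsub hj)).2
        · exact Finset.le_sup (f := id) hi
      exact Finset.mem_Icc.2 ⟨h2.1, by omega⟩
    · rintro ⟨hsub, hs⟩
      refine ⟨⟨hsub.trans (Finset.Icc_subset_Icc le_rfl (by omega)), hs⟩, fun hsup => ?_⟩
      have h4 : F.sup id ≤ k-1 := Finset.sup_le fun j hj => (Finset.mem_Icc.1 (hsub hj)).2
      omega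
  rw [h1] at hsplit
  have hTh1 : Th A x (k-1) = ∑ F ∈ Reps A x (k-1), (-1:ℤ)^F.card := rfl
  have hTh2 : Th A x k = ∑ F ∈ Reps A x k, (-1:ℤ)^F.card := rfl
  omega

lemma len_zero_empty (x : ℕ) (hx : 1 ≤ x) :
    sgnSum {F | F ∈ SRep A x ∧ len F = 0} = 0 := by
  have he : {F | F ∈ SRep A x ∧ len F = 0} = (∅ : Set (Finset ℕ)) := by
    ext F
    simp only [SRep, len, Set.mem_setOf_eq, Set.mem_empty_iff_false, iff_false, not_and]
    rintro ⟨hp, hs⟩ hsup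
    rcases Finset.eq_empty_or_nonempty F with rfl | ⟨i, hi⟩
    · simp at hs; omega
    · have h2 : i ≤ F.sup id := Finset.le_sup (f := id) hi
      have h3 := hp i hi
      omega
  rw [he, sgnSum, finsum_mem_empty]

lemma B_mem {z : ℤ} (h : B z) : z ∈ ({-1, 0, 1} : Set ℤ) := by
  rcases h with h|h|h <;> subst h <;> simp

end Assemble

end QF

/-- Proposition 5.3: for a quasifibonacci sequence of EVEN level `N` and `A_k ≤ n < A_{k+1}`,
each of `f_n = Σ_{a ∈ T_n} σ(a)`, `g_n = Σ_{a ∈ R_n} σ(a)`, `h_n = Σ_{a ∈ S_n} σ(a)` lies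
in `{-1, 0, 1}`. -/
theorem stmt_16 (N : ℕ) (hN : 2 ≤ N) (hNeven : Even N) (A : ℕ → ℕ) (hA : QuasiFib N A)
    (k n : ℕ) (hk : 1 ≤ k) (hn : 1 ≤ n) (h1 : A k ≤ n) (h2 : n < A (k + 1)) :
    sgnSum {F | F ∈ SRep A n ∧ len F = k} ∈ ({-1, 0, 1} : Set ℤ) ∧
    sgnSum {F | F ∈ SRep A n ∧ len F = k - 1} ∈ ({-1, 0, 1} : Set ℤ) ∧
    sgnSum (SRep A n) ∈ ({-1, 0, 1} : Set ℤ) := by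
  classical
  obtain ⟨hpos, hrec', hdom'⟩ := hA
  have hrec : ∀ j, 1 ≤ j → A (j + N) = QF.PS A j (j + N) := by
    intro j hj
    rw [hrec' j hj, QF.PS]
    congr 1
    rw [← Finset.Ico_add_one_right_eq_Icc]
    congr 1
    omega
  have hdom : ∀ j, 1 ≤ j → j ≤ N → QF.PS A 1 j < A j := by
    intro j hj1 hj2
    have h3 := hdom' j hj1 hj2
    have he : Finset.Ico 1 j = Finset.Icc 1 (j-1) := by
      rw [← Finset.Ico_add_one_right_eq_Icc]
      congr 1
      omega
    rw [QF.PS, he]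
    exact h3
  have hB := QF.Bmain hN hNeven hpos hrec hdom
  -- the `f` part
  have hf : sgnSum {F | F ∈ SRep A n ∧ len F = k}
      = - QF.Th A (n - A k) (k-1) := by
    rw [QF.sgnSum_coe (QF.len_set_eq hN hpos hrec hdom n k),
      QF.lam_eq n k hk]
    obtain ⟨b0, rfl⟩ : ∃ b0, k = b0+1 := ⟨k-1, by omega⟩
    have h5 := QF.S5b (A := A) (x := n - A (b0+1)) b0
    rw [Nat.sub_add_cancel h1] at h5
    rw [show b0+1-1 = b0 from rfl]
    omega
  -- the `h` part
  have hh : sgnSum (SRep A n) = QF.Th A n n :=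
    QF.sgnSum_coe (QF.srep_coe hN hpos hrec hdom n)
  refine ⟨?_, ?_, ?_⟩
  · rw [hf]
    exact QF.B_mem (QF.Bneg (hB (n - A k) (k-1)))
  · rcases eq_or_lt_of_le hk with hk1 | hk2
    · rw [show k - 1 = 0 from by omega]
      rw [QF.len_zero_empty n hn]
      simp
    · have hk1' : 1 ≤ k - 1 := by omega
      have hg : sgnSum {F | F ∈ SRep A n ∧ len F = k - 1}
          = - QF.Th A (n - A (k-1)) (k-1-1) := by
        rw [QF.sgnSum_coe (QF.len_set_eq hN hpos hrec hdom n (k-1)),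
          QF.lam_eq n (k-1) hk1']
        obtain ⟨b0, hb0⟩ : ∃ b0, k - 1 = b0+1 := ⟨k-2, by omega⟩
        have hle : A (b0+1) ≤ n := by
          have h3 := QF.A_mono hN hpos hrec hdom (b0+1) k (by omega) (by omega)
          omega
        have h5 := QF.S5b (A := A) (x := n - A (b0+1)) b0
        rw [Nat.sub_add_cancel hle] at h5
        rw [hb0, show b0+1-1 = b0 from rfl]
        omega
      rw [hg]
      exact QF.B_mem (QF.Bneg (hB (n - A (k-1)) (k-1-1)))
  · rw [hh]
    exact QF.B_mem (hB n n)
end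

section
/- Let N ≥ 2 be an ODD integer and let A_1, A_2, … be a quasifibonacci sequence of level N. Then for every k ≥ N and every n with A_k ≤ n < A_{k+1}, the quantity h_n = Σ_{a∈S_n} σ(a) satisfies |h_n| ≤ 2^{k−N}. -/
/-- superincreasing injectivity -/
lemma super_inj (A : ℕ → ℕ) (M : ℕ)
    (h : ∀ m, 1 ≤ m → m ≤ M → (∑ i ∈ Finset.Icc 1 (m - 1), A i) < A m) :
    ∀ F G : Finset ℕ, F ⊆ Finset.Icc 1 M → G ⊆ Finset.Icc 1 M →
      (∑ i ∈ F, A i) = (∑ i ∈ G, A i) → F = G := by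
  induction M with
  | zero =>
    intro F G hF hG _
    have : Finset.Icc 1 0 = ∅ := by decide
    rw [this, Finset.subset_empty] at hF hG
    rw [hF, hG]
  | succ M ih =>
    intro F G hF hG hsum
    have h' : ∀ m, 1 ≤ m → m ≤ M → (∑ i ∈ Finset.Icc 1 (m - 1), A i) < A m :=
      fun m h1 h2 => h m h1 (h2.trans (Nat.le_succ M))
    have key : ∀ P Q : Finset ℕ, P ⊆ Finset.Icc 1 (M+1) → Q ⊆ Finset.Icc 1 (M+1) →
        (∑ i ∈ P, A i) = (∑ i ∈ Q, A i) → (M+1) ∈ P → (M+1) ∈ Q := by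
      intro P Q hP hQ hs hmP
      by_contra hmQ
      have hQ' : Q ⊆ Finset.Icc 1 M := by
        intro i hi
        have := hQ hi
        simp only [Finset.mem_Icc] at this ⊢
        refine ⟨this.1, ?_⟩
        rcases Nat.lt_or_ge i (M+1) with h' | h'
        · omega
        · exfalso; have : i = M + 1 := by omega
          exact hmQ (this ▸ hi)
      have h1 : (∑ i ∈ Q, A i) ≤ ∑ i ∈ Finset.Icc 1 M, A i :=
        Finset.sum_le_sum_of_subset hQ'
      have h2 : A (M+1) ≤ ∑ i ∈ P, A i := Finset.single_le_sum (fun i _ => Nat.zero_le _) hmP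
      have h3 : (∑ i ∈ Finset.Icc 1 M, A i) < A (M+1) := by
        have := h (M+1) (by omega) le_rfl
        simpa using this
      omega
    by_cases hm : (M+1) ∈ F
    · have hmG : (M+1) ∈ G := key F G hF hG hsum hm
      have e1 : F = insert (M+1) (F.erase (M+1)) := (Finset.insert_erase hm).symm
      have e2 : G = insert (M+1) (G.erase (M+1)) := (Finset.insert_erase hmG).symm
      have s1 : (∑ i ∈ F, A i) = A (M+1) + ∑ i ∈ F.erase (M+1), A i := by
        nth_rewrite 1 [e1]
        rw [Finset.sum_insert (Finset.notMem_erase _ _)]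
      have s2 : (∑ i ∈ G, A i) = A (M+1) + ∑ i ∈ G.erase (M+1), A i := by
        nth_rewrite 1 [e2]
        rw [Finset.sum_insert (Finset.notMem_erase _ _)]
      have hFe : F.erase (M+1) ⊆ Finset.Icc 1 M := by
        intro i hi
        have h1 := Finset.mem_of_mem_erase hi
        have h2 := Finset.ne_of_mem_erase hi
        have := hF h1
        simp only [Finset.mem_Icc] at this ⊢
        omega
      have hGe : G.erase (M+1) ⊆ Finset.Icc 1 M := by
        intro i hi
        have h1 := Finset.mem_of_mem_erase hi
        have h2 := Finset.ne_of_mem_erase hi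
        have := hG h1
        simp only [Finset.mem_Icc] at this ⊢
        omega
      have := ih h' _ _ hFe hGe (by omega)
      rw [e1, e2, this]
    · have hmG : (M+1) ∉ G := fun hmG => hm (key G F hG hF hsum.symm hmG)
      have hF' : F ⊆ Finset.Icc 1 M := by
        intro i hi
        have := hF hi
        simp only [Finset.mem_Icc] at this ⊢
        refine ⟨this.1, ?_⟩
        by_contra h'
        have : i = M + 1 := by omega
        exact hm (this ▸ hi)
      have hG' : G ⊆ Finset.Icc 1 M := by
        intro i hi
        have := hG hi
        simp only [Finset.mem_Icc] at this ⊢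
        refine ⟨this.1, ?_⟩
        by_contra h'
        have : i = M + 1 := by omega
        exact hmG (this ▸ hi)
      exact ih h' _ _ hF' hG' hsum



lemma qf_step (N : ℕ) (hN : 2 ≤ N) (A : ℕ → ℕ) (hA : QuasiFib N A) :
    ∀ i, 1 ≤ i → A i < A (i + 1) := by
  intro i hi
  rcases Nat.lt_or_ge i N with hiN | hiN
  · -- i + 1 ≤ N
    have h := hA.2.2 (i+1) (by omega) (by omega)
    simp only [Nat.add_sub_cancel] at h
    calc A i ≤ ∑ j ∈ Finset.Icc 1 i, A j :=
          Finset.single_le_sum (fun j _ => Nat.zero_le _) (Finset.mem_Icc.mpr ⟨hi, le_rfl⟩)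
      _ < A (i+1) := h
  · -- i ≥ N, so i + 1 = (i + 1 - N) + N with i+1-N ≥ 1
    set j := i + 1 - N with hj
    have hj1 : 1 ≤ j := by omega
    have h := hA.2.1 j hj1
    have hji : j + N = i + 1 := by omega
    have hji2 : j + N - 1 = i := by omega
    rw [hji] at h
    simp only [Nat.add_sub_cancel] at h
    have hii : i ∈ Finset.Icc j i := Finset.mem_Icc.mpr ⟨by omega, le_rfl⟩
    have hjj : j ∈ (Finset.Icc j i).erase i := by
      rw [Finset.mem_erase]
      exact ⟨by omega, Finset.mem_Icc.mpr ⟨le_rfl, by omega⟩⟩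
    have hsum : ∑ m ∈ Finset.Icc j i, A m = A i + ∑ m ∈ (Finset.Icc j i).erase i, A m :=
      (Finset.add_sum_erase _ _ hii).symm
    have hpos : 0 < ∑ m ∈ (Finset.Icc j i).erase i, A m := by
      calc 0 < A j := hA.1 j hj1
        _ ≤ _ := Finset.single_le_sum (fun m _ => Nat.zero_le _) hjj
    omega

lemma qf_mono (N : ℕ) (hN : 2 ≤ N) (A : ℕ → ℕ) (hA : QuasiFib N A) :
    ∀ i j, 1 ≤ i → i ≤ j → A i ≤ A j := by
  intro i j hi hij
  induction j with
  | zero => omega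
  | succ j ih =>
    rcases Nat.lt_or_ge i (j+1) with h | h
    · have h1 := ih (by omega)
      have h2 := qf_step N hN A hA j (by omega)
      exact le_trans h1 (le_of_lt h2)
    · have he : i = j + 1 := by omega
      rw [he]

/-- Proposition 5.4: for a quasifibonacci sequence of ODD level `N`, if `k ≥ N` and
`A_k ≤ n < A_{k+1}`, then `|h_n| ≤ 2^{k-N}`. -/
theorem stmt_17 (N : ℕ) (hN : 2 ≤ N) (hNodd : Odd N) (A : ℕ → ℕ) (hA : QuasiFib N A)
    (k n : ℕ) (hk : N ≤ k) (h1 : A k ≤ n) (h2 : n < A (k + 1)) :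
    |sgnSum (SRep A n)| ≤ 2 ^ (k - N) := by
  classical
  set S : Finset (Finset ℕ) :=
    ((Finset.Icc 1 k).powerset).filter (fun F => (∑ i ∈ F, A i) = n) with hS
  have hset : SRep A n = ↑S := by
    ext F
    simp only [SRep, Set.mem_setOf_eq, hS, Finset.mem_coe, Finset.mem_filter,
      Finset.mem_powerset]
    constructor
    · rintro ⟨hpos', hsum⟩
      refine ⟨?_, hsum⟩
      intro i hi
      rw [Finset.mem_Icc]
      refine ⟨hpos' i hi, ?_⟩
      by_contra h'
      have hm : A (k+1) ≤ A i := qf_mono N hN A hA (k+1) i (by omega) (by omega)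
      have hle : A i ≤ ∑ j ∈ F, A j := Finset.single_le_sum (fun j _ => Nat.zero_le _) hi
      omega
    · rintro ⟨hsub, hsum⟩
      exact ⟨fun i hi => (Finset.mem_Icc.mp (hsub hi)).1, hsum⟩
  rw [hset, sgnSum, finsum_mem_coe_finset]
  have hcard : S.card ≤ 2 ^ (k - N) := by
    have hmaps : ∀ F ∈ S, F \ Finset.Icc 1 N ∈ (Finset.Icc (N+1) k).powerset := by
      intro F hF
      rw [Finset.mem_powerset]
      intro i hi
      rw [Finset.mem_sdiff, Finset.mem_Icc] at hi
      have hsub := (Finset.mem_filter.mp hF).1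
      rw [Finset.mem_powerset] at hsub
      have := Finset.mem_Icc.mp (hsub hi.1)
      rw [Finset.mem_Icc]
      omega
    have hinj : Set.InjOn (fun F => F \ Finset.Icc 1 N) ↑S := by
      intro F hF G hG heq
      simp only at heq
      rw [Finset.mem_coe, hS, Finset.mem_filter] at hF hG
      have hsum : (∑ i ∈ F ∩ Finset.Icc 1 N, A i) + ∑ i ∈ F \ Finset.Icc 1 N, A i
          = (∑ i ∈ G ∩ Finset.Icc 1 N, A i) + ∑ i ∈ G \ Finset.Icc 1 N, A i := by
        rw [Finset.sum_inter_add_sum_sdiff, Finset.sum_inter_add_sum_sdiff, hF.2, hG.2]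
      rw [heq] at hsum
      have hsum' : (∑ i ∈ F ∩ Finset.Icc 1 N, A i) = ∑ i ∈ G ∩ Finset.Icc 1 N, A i := by
        omega
      have hinter : F ∩ Finset.Icc 1 N = G ∩ Finset.Icc 1 N :=
        super_inj A N hA.2.2 _ _ Finset.inter_subset_right Finset.inter_subset_right hsum'
      calc F = F ∩ Finset.Icc 1 N ∪ F \ Finset.Icc 1 N := (sup_inf_sdiff F (Finset.Icc 1 N)).symm
        _ = G ∩ Finset.Icc 1 N ∪ G \ Finset.Icc 1 N := by rw [hinter, heq]
        _ = G := sup_inf_sdiff G (Finset.Icc 1 N)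
    calc S.card ≤ ((Finset.Icc (N+1) k).powerset).card :=
          Finset.card_le_card_of_injOn _ hmaps hinj
      _ = 2 ^ (k - N) := by
          rw [Finset.card_powerset, Nat.card_Icc]
          congr 1
          omega
  calc |∑ F ∈ S, (-1:ℤ)^F.card| ≤ ∑ F ∈ S, |(-1:ℤ)^F.card| := Finset.abs_sum_le_sum_abs _ _
    _ = S.card := by simp [abs_pow]
    _ ≤ 2 ^ (k - N) := by exact_mod_cast hcard
end

section
/- Let A_1, A_2, … be a quasifibonacci sequence of level N, let k ≥ 1, and let n satisfy A_k ≤ n < A_{k+1}. Then h_{n'} = (−1)^k · h_n, where n' = A_1 + A_2 + ⋯ + A_k − n and h_m = Σ_{a∈S_m} σ(a) (with h_0 interpreted as 1). -/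
/-- ℤ-indexed version of `SRep` (empty for negative `m`). -/
def SRepZ (A : ℕ → ℕ) (m : ℤ) : Set (Finset ℕ) :=
  {F | (∀ i ∈ F, 1 ≤ i) ∧ (∑ i ∈ F, (A i : ℤ)) = m}

/-- `h_m = Σ_{a ∈ S_m} σ(a)` for `m : ℤ`, where `σ(a) = (-1)^{number of ones of a}`;
`h_m = 0` when `S_m = ∅` (in particular for `m < 0`), and `h_0 = 1` (the empty partition). -/
noncomputable def hcoef (A : ℕ → ℕ) (m : ℤ) : ℤ := ∑ᶠ F ∈ SRepZ A m, (-1 : ℤ) ^ F.card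

lemma quasi_step {N : ℕ} (hN : 2 ≤ N) {A : ℕ → ℕ} (hA : QuasiFib N A) :
    ∀ j, 1 ≤ j → A j < A (j + 1) := by
  obtain ⟨hpos, hrec, hinit⟩ := hA
  intro j hj
  rcases le_or_gt (j + 1) N with h | h
  · have h3 := hinit (j + 1) (by omega) h
    have h4 : A j ≤ ∑ i ∈ Finset.Icc 1 (j + 1 - 1), A i := by
      apply Finset.single_le_sum (fun i _ => Nat.zero_le _)
      simp; omega
    omega
  · set m := j + 1 - N with hm
    have hm1 : 1 ≤ m := by omega
    have hr := hrec m hm1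
    have e1 : m + N = j + 1 := by omega
    rw [e1] at hr
    have e2 : j + 1 - 1 = j := by omega
    rw [e2] at hr
    have hle : A m + A j ≤ ∑ i ∈ Finset.Icc m j, A i := by
      have hsub : ({m, j} : Finset ℕ) ⊆ Finset.Icc m j := by
        intro x hx
        simp only [Finset.mem_insert, Finset.mem_singleton] at hx
        simp only [Finset.mem_Icc]; omega
      calc A m + A j = ∑ i ∈ ({m, j} : Finset ℕ), A i := by
            rw [Finset.sum_pair (by omega)]
        _ ≤ _ := Finset.sum_le_sum_of_subset hsub
    have := hpos m hm1
    omega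

lemma quasi_mono {N : ℕ} (hN : 2 ≤ N) {A : ℕ → ℕ} (hA : QuasiFib N A) :
    ∀ i j, 1 ≤ i → i ≤ j → A i ≤ A j := by
  intro i j hi hij
  induction j, hij using Nat.le_induction with
  | base => exact le_refl _
  | succ j hij ih =>
    have h2 := quasi_step hN hA j (by omega)
    omega

lemma quasi_sumT {N : ℕ} (hN : 2 ≤ N) {A : ℕ → ℕ} (hA : QuasiFib N A) :
    ∀ m, ∑ i ∈ Finset.Icc 1 m, A i < A (m + 2) := by
  intro m
  induction m using Nat.strong_induction_on with
  | _ m ih =>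
    obtain ⟨hpos, hrec, hinit⟩ := hA
    rcases Nat.eq_zero_or_pos m with rfl | hm
    · simpa using hpos 2 (by omega)
    obtain ⟨p, rfl⟩ : ∃ p, m = p + 1 := ⟨m - 1, by omega⟩
    rcases le_or_gt (p + 3) N with h | h
    · have h3 := hinit (p + 3) (by omega) h
      have e : p + 3 - 1 = p + 2 := by omega
      rw [e] at h3
      have h4 : ∑ i ∈ Finset.Icc 1 (p + 1), A i ≤ ∑ i ∈ Finset.Icc 1 (p + 2), A i :=
        Finset.sum_le_sum_of_subset (Finset.Icc_subset_Icc_right (by omega))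
      have e2 : p + 1 + 2 = p + 3 := by omega
      rw [e2]; omega
    · set q := p + 3 - N with hq
      have hq1 : 1 ≤ q := by omega
      have hr := hrec q hq1
      have e1 : q + N = p + 3 := by omega
      rw [e1] at hr
      have e2 : p + 3 - 1 = p + 2 := by omega
      rw [e2] at hr
      have hle : A (p + 1) + A (p + 2) ≤ ∑ i ∈ Finset.Icc q (p + 2), A i := by
        have hsub : ({p + 1, p + 2} : Finset ℕ) ⊆ Finset.Icc q (p + 2) := by
          intro x hx
          simp only [Finset.mem_insert, Finset.mem_singleton] at hx
          simp only [Finset.mem_Icc]; omega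
        calc A (p + 1) + A (p + 2) = ∑ i ∈ ({p + 1, p + 2} : Finset ℕ), A i := by
              rw [Finset.sum_pair (by omega)]
          _ ≤ _ := Finset.sum_le_sum_of_subset hsub
      have ihm : ∑ i ∈ Finset.Icc 1 p, A i < A (p + 2) := ih p (by omega)
      have hsplit : ∑ i ∈ Finset.Icc 1 (p + 1), A i = (∑ i ∈ Finset.Icc 1 p, A i) + A (p + 1) :=
        Finset.sum_Icc_succ_top (by omega) _
      have e3 : p + 1 + 2 = p + 3 := by omega
      rw [e3]; omega

lemma hcoef_finset {N : ℕ} (hN : 2 ≤ N) {A : ℕ → ℕ} (hA : QuasiFib N A)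
    (k : ℕ) (hk : 1 ≤ k) (m : ℤ) (hm : m < A (k + 1)) :
    hcoef A m = ∑ F ∈ (Finset.Icc 1 k).powerset.filter
      (fun F => ∑ i ∈ F, (A i : ℤ) = m), (-1 : ℤ) ^ F.card := by
  have hset : SRepZ A m = ↑((Finset.Icc 1 k).powerset.filter
      (fun F => ∑ i ∈ F, (A i : ℤ) = m)) := by
    ext F
    simp only [SRepZ, Set.mem_setOf_eq, Finset.coe_filter, Finset.mem_powerset,
      Set.mem_setOf_eq]
    constructor
    · rintro ⟨hpos, hsum⟩
      refine ⟨fun i hi => ?_, hsum⟩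
      have hAi : (A i : ℤ) ≤ m := by
        rw [← hsum]
        exact Finset.single_le_sum (f := fun i => (A i : ℤ))
          (fun j _ => by positivity) hi
      have hik : i ≤ k := by
        by_contra hc
        have := quasi_mono hN hA (k + 1) i (by omega) (by omega)
        have : (A (k + 1) : ℤ) ≤ (A i : ℤ) := by exact_mod_cast this
        omega
      exact Finset.mem_Icc.mpr ⟨hpos i hi, hik⟩
    · rintro ⟨hsub, hsum⟩
      exact ⟨fun i hi => (Finset.mem_Icc.mp (hsub hi)).1, hsum⟩
  rw [hcoef, hset, finsum_mem_coe_finset]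

lemma neg_one_pow_sub (k c : ℕ) (h : c ≤ k) :
    (-1 : ℤ) ^ (k - c) = (-1) ^ k * (-1) ^ c := by
  have h1 : (-1 : ℤ) ^ (k - c) * (-1) ^ c = (-1) ^ k := by
    rw [← pow_add]; congr 1; omega
  have h2 : (-1 : ℤ) ^ c * (-1) ^ c = 1 := by
    rw [← pow_add]; exact Even.neg_one_pow ⟨c, rfl⟩
  calc (-1 : ℤ) ^ (k - c) = (-1) ^ (k - c) * ((-1) ^ c * (-1) ^ c) := by rw [h2, mul_one]
    _ = ((-1) ^ (k - c) * (-1) ^ c) * (-1) ^ c := by ring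
    _ = (-1) ^ k * (-1) ^ c := by rw [h1]

/-- For `A_k ≤ n < A_{k+1}` and `n' = A_1 + A_2 + ⋯ + A_k - n`, one has
`h_{n'} = (-1)^k · h_n`. -/
theorem stmt_19 (N : ℕ) (hN : 2 ≤ N) (A : ℕ → ℕ) (hA : QuasiFib N A)
    (k n : ℕ) (hk : 1 ≤ k) (h1 : A k ≤ n) (h2 : n < A (k + 1)) :
    hcoef A ((∑ i ∈ Finset.Icc 1 k, (A i : ℤ)) - n) = (-1) ^ k * hcoef A n := by
  set T : ℤ := ∑ i ∈ Finset.Icc 1 k, (A i : ℤ) with hT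
  have hmono := quasi_mono hN hA
  -- T - n < A (k+1)
  have hTk : T = (∑ i ∈ Finset.Icc 1 (k - 1), (A i : ℤ)) + A k := by
    obtain ⟨p, rfl⟩ : ∃ p, k = p + 1 := ⟨k - 1, by omega⟩
    have := Finset.sum_Icc_succ_top (a := 1) (b := p) (f := fun i => (A i : ℤ)) (by omega)
    simpa using this
  have hsum1 : ∑ i ∈ Finset.Icc 1 (k - 1), A i < A (k + 1) := by
    have := quasi_sumT hN hA (k - 1)
    have e : k - 1 + 2 = k + 1 := by omega
    rwa [e] at this
  have hsum1' : (∑ i ∈ Finset.Icc 1 (k - 1), (A i : ℤ)) < A (k + 1) := by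
    push_cast at hsum1 ⊢
    exact_mod_cast hsum1
  have hm' : T - n < (A (k + 1) : ℤ) := by omega
  have hn' : (n : ℤ) < (A (k + 1) : ℤ) := by exact_mod_cast h2
  rw [hcoef_finset hN hA k hk _ hm', hcoef_finset hN hA k hk _ hn', Finset.mul_sum]
  refine Finset.sum_bij' (fun F _ => Finset.Icc 1 k \ F) (fun G _ => Finset.Icc 1 k \ G)
    ?_ ?_ ?_ ?_ ?_
  · intro F hF
    simp only [Finset.mem_filter, Finset.mem_powerset] at hF ⊢
    obtain ⟨hFs, hFsum⟩ := hF
    refine ⟨Finset.sdiff_subset, ?_⟩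
    rw [Finset.sum_sdiff_eq_sub hFs, hFsum]
    ring
  · intro G hG
    simp only [Finset.mem_filter, Finset.mem_powerset] at hG ⊢
    obtain ⟨hGs, hGsum⟩ := hG
    refine ⟨Finset.sdiff_subset, ?_⟩
    rw [Finset.sum_sdiff_eq_sub hGs, hGsum]
  · intro F hF
    simp only [Finset.mem_filter, Finset.mem_powerset] at hF
    exact Finset.sdiff_sdiff_eq_self hF.1
  · intro G hG
    simp only [Finset.mem_filter, Finset.mem_powerset] at hG
    exact Finset.sdiff_sdiff_eq_self hG.1
  · intro F hF
    simp only [Finset.mem_filter, Finset.mem_powerset] at hF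
    have hcard : (Finset.Icc 1 k \ F).card = k - F.card := by
      rw [Finset.card_sdiff_of_subset hF.1, Nat.card_Icc]; omega
    have hck : F.card ≤ k := by
      have := Finset.card_le_card hF.1
      simp [Nat.card_Icc] at this
      omega
    rw [hcard, neg_one_pow_sub k F.card hck, ← mul_assoc, ← pow_add]
    rw [Even.neg_one_pow ⟨k, rfl⟩, one_mul]
end
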